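/- arXiv:2511.13316 — 4 statements merged into one kernel-verified Lean document; each statement's English description precedes it below -/
import Mathlib

section
/- Let V be an admissible potential on Ω. Then for every f=(f^E,f^H) ∈ (H_adm(∂Ω∖∂Ω₁⁺))² and every g=(g^E,g^H) ∈ (H_adm(∂Ω₁⁻))² there exists a unique u ∈ H(Ω;ℂ⁶) solving the Maxwell system with potential V in Ω and satisfying u_tan = f on ∂Ω∖∂Ω₁⁺ and ∂_tan u = g on ∂Ω₁⁻. (No spectral assumption on V is needed.) -/
/-! Common framework: discrete anisotropic Maxwell operator on a paving of ℤ³. -/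

abbrev Z3 := ℤ × ℤ × ℤ
abbrev C3 := ℂ × ℂ × ℂ

def e1 : Z3 := (1, 0, 0)
def e2 : Z3 := (0, 1, 0)
def e3 : Z3 := (0, 0, 1)

/-- A family of six ℂ-valued components `u_j^{E/H}` (j = 1,2,3) on ℤ³. -/
structure Fam where
  E1 : Z3 → ℂ
  E2 : Z3 → ℂ
  E3 : Z3 → ℂ
  H1 : Z3 → ℂ
  H2 : Z3 → ℂ
  H3 : Z3 → ℂ

/-- A diagonal 6×6 complex potential `V = diag(V₁^E,V₂^E,V₃^E,V₁^H,V₂^H,V₃^H)`. -/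
structure Pot where
  E1 : Z3 → ℂ
  E2 : Z3 → ℂ
  E3 : Z3 → ℂ
  H1 : Z3 → ℂ
  H2 : Z3 → ℂ
  H3 : Z3 → ℂ

/-- `V(n)` is invertible (all diagonal entries nonzero) for `n` in the given set. -/
def PotInv (S : Set Z3) (V : Pot) : Prop :=
  ∀ n ∈ S, V.E1 n ≠ 0 ∧ V.E2 n ≠ 0 ∧ V.E3 n ≠ 0 ∧ V.H1 n ≠ 0 ∧ V.H2 n ≠ 0 ∧ V.H3 n ≠ 0

/-- `V(n) = I₆` off the given set. -/
def PotExt (S : Set Z3) (V : Pot) : Prop :=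
  ∀ n ∉ S, V.E1 n = 1 ∧ V.E2 n = 1 ∧ V.E3 n = 1 ∧ V.H1 n = 1 ∧ V.H2 n = 1 ∧ V.H3 n = 1

/-- Admissible potential on `S`, extended by the identity off `S`. -/
def PotAdm (S : Set Z3) (V : Pot) : Prop := PotInv S V ∧ PotExt S V

/-! The recursion equations (R1)–(R6) and the auxiliary equations (A1),(A2). -/

def eqR1 (V : Pot) (u : Fam) (n : Z3) : Prop :=
  u.E2 (n + e1) =
    2 * Complex.I * V.H3 n * u.H3 n + u.E1 (n + e2) - u.E1 (n - e2) + u.E2 (n - e1)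

def eqR2 (V : Pot) (u : Fam) (n : Z3) : Prop :=
  u.E3 (n + e1) =
    -(2 * Complex.I * V.H2 n * u.H2 n) + u.E1 (n + e3) - u.E1 (n - e3) + u.E3 (n - e1)

def eqR3 (V : Pot) (u : Fam) (n : Z3) : Prop :=
  u.H2 (n + e1) =
    -(2 * Complex.I * V.E3 n * u.E3 n) + u.H1 (n + e2) - u.H1 (n - e2) + u.H2 (n - e1)

def eqR4 (V : Pot) (u : Fam) (n : Z3) : Prop :=
  u.H3 (n + e1) =
    2 * Complex.I * V.E2 n * u.E2 n + u.H1 (n + e3) - u.H1 (n - e3) + u.H3 (n - e1)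

def eqR5 (V : Pot) (u : Fam) (n : Z3) : Prop :=
  u.E1 (n + e1) = (-(2 * Complex.I * V.E1 (n + e1)))⁻¹ *
    ((2 * Complex.I * V.E2 (n + e2) * u.E2 (n + e2)
        + 2 * Complex.I * V.E3 (n + e3) * u.E3 (n + e3)
        + u.H3 (n + e2 - e1) - u.H2 (n + e3 - e1))
      - (2 * Complex.I * V.E2 (n - e2) * u.E2 (n - e2)
        + 2 * Complex.I * V.E3 (n - e3) * u.E3 (n - e3)
        + u.H3 (n - e2 - e1) - u.H2 (n - e3 - e1)))

def eqR6 (V : Pot) (u : Fam) (n : Z3) : Prop :=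
  u.H1 (n + e1) = (2 * Complex.I * V.H1 (n + e1))⁻¹ *
    ((-(2 * Complex.I * V.H2 (n + e2) * u.H2 (n + e2))
        - 2 * Complex.I * V.H3 (n + e3) * u.H3 (n + e3)
        + u.E3 (n + e2 - e1) - u.E2 (n + e3 - e1))
      - (-(2 * Complex.I * V.H2 (n - e2) * u.H2 (n - e2))
        - 2 * Complex.I * V.H3 (n - e3) * u.H3 (n - e3)
        + u.E3 (n - e2 - e1) - u.E2 (n - e3 - e1)))

def eqA1 (V : Pot) (u : Fam) (n : Z3) : Prop :=
  u.E1 n = (-(2 * Complex.I * V.E1 n))⁻¹ *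
    (u.H3 (n + e2) - u.H3 (n - e2) - u.H2 (n + e3) + u.H2 (n - e3))

def eqA2 (V : Pot) (u : Fam) (n : Z3) : Prop :=
  u.H1 n = (2 * Complex.I * V.H1 n)⁻¹ *
    (u.E3 (n + e2) - u.E3 (n - e2) - u.E2 (n + e3) + u.E2 (n - e3))

/-- Equations (R1)–(R4) at `n`. -/
def ReqB (V : Pot) (u : Fam) (n : Z3) : Prop :=
  eqR1 V u n ∧ eqR2 V u n ∧ eqR3 V u n ∧ eqR4 V u n

/-- Equations (R1)–(R6) at `n`. -/
def Req (V : Pot) (u : Fam) (n : Z3) : Prop :=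
  ReqB V u n ∧ eqR5 V u n ∧ eqR6 V u n

/-! Geometry of the paving `Ω = [[1,R₁]]×[[1,R₂]]×[[1,R₃]]` (R packed as a triple). -/

def Omega (R : Z3) : Set Z3 :=
  {n | 1 ≤ n.1 ∧ n.1 ≤ R.1 ∧ 1 ≤ n.2.1 ∧ n.2.1 ≤ R.2.1 ∧ 1 ≤ n.2.2 ∧ n.2.2 ≤ R.2.2}

def bd1p (R : Z3) : Set Z3 :=
  {n | n.1 = R.1 + 1 ∧ 1 ≤ n.2.1 ∧ n.2.1 ≤ R.2.1 ∧ 1 ≤ n.2.2 ∧ n.2.2 ≤ R.2.2}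
def bd1m (R : Z3) : Set Z3 :=
  {n | n.1 = 0 ∧ 1 ≤ n.2.1 ∧ n.2.1 ≤ R.2.1 ∧ 1 ≤ n.2.2 ∧ n.2.2 ≤ R.2.2}
def bd2p (R : Z3) : Set Z3 :=
  {n | n.2.1 = R.2.1 + 1 ∧ 1 ≤ n.1 ∧ n.1 ≤ R.1 ∧ 1 ≤ n.2.2 ∧ n.2.2 ≤ R.2.2}
def bd2m (R : Z3) : Set Z3 :=
  {n | n.2.1 = 0 ∧ 1 ≤ n.1 ∧ n.1 ≤ R.1 ∧ 1 ≤ n.2.2 ∧ n.2.2 ≤ R.2.2}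
def bd3p (R : Z3) : Set Z3 :=
  {n | n.2.2 = R.2.2 + 1 ∧ 1 ≤ n.1 ∧ n.1 ≤ R.1 ∧ 1 ≤ n.2.1 ∧ n.2.1 ≤ R.2.1}
def bd3m (R : Z3) : Set Z3 :=
  {n | n.2.2 = 0 ∧ 1 ≤ n.1 ∧ n.1 ≤ R.1 ∧ 1 ≤ n.2.1 ∧ n.2.1 ≤ R.2.1}

def bd1 (R : Z3) : Set Z3 := bd1p R ∪ bd1m R
def bd2 (R : Z3) : Set Z3 := bd2p R ∪ bd2m R
def bd3 (R : Z3) : Set Z3 := bd3p R ∪ bd3m R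

/-- The boundary `∂Ω`. -/
def bd (R : Z3) : Set Z3 := bd1 R ∪ bd2 R ∪ bd3 R

/-- The outgoing normal `ν(n)` (correct on each face of `∂Ω`). -/
def nuv (R : Z3) (n : Z3) : Z3 :=
  if n.1 = 0 then (-1, 0, 0)
  else if n.1 = R.1 + 1 then (1, 0, 0)
  else if n.2.1 = 0 then (0, -1, 0)
  else if n.2.1 = R.2.1 + 1 then (0, 1, 0)
  else if n.2.2 = 0 then (0, 0, -1)
  else (0, 0, 1)

/-- The unique neighbour `m_Ω(n) ∈ Ω` of a boundary point `n`. -/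
def mOm (R : Z3) (n : Z3) : Z3 := n - nuv R n

/-! ℂ³ operations against integer vectors. -/

noncomputable def zdot (a : C3) (b : Z3) : ℂ :=
  a.1 * (b.1 : ℂ) + a.2.1 * (b.2.1 : ℂ) + a.2.2 * (b.2.2 : ℂ)

noncomputable def zsmul (c : ℂ) (b : Z3) : C3 :=
  (c * (b.1 : ℂ), c * (b.2.1 : ℂ), c * (b.2.2 : ℂ))

/-- Cross product `a ∧ b` of a ℂ³ vector with an integer vector. -/
noncomputable def zcross (a : C3) (b : Z3) : C3 :=
  (a.2.1 * (b.2.2 : ℂ) - a.2.2 * (b.2.1 : ℂ),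
   a.2.2 * (b.1 : ℂ) - a.1 * (b.2.2 : ℂ),
   a.1 * (b.2.1 : ℂ) - a.2.1 * (b.1 : ℂ))

def vecE (u : Fam) (n : Z3) : C3 := (u.E1 n, u.E2 n, u.E3 n)
def vecH (u : Fam) (n : Z3) : C3 := (u.H1 n, u.H2 n, u.H3 n)

/-- Tangential trace `u^E_tan(n)` at a boundary point. -/
noncomputable def tanE (R : Z3) (u : Fam) (n : Z3) : C3 :=
  vecE u n - zsmul (zdot (vecE u n) (nuv R n)) (nuv R n)

noncomputable def tanH (R : Z3) (u : Fam) (n : Z3) : C3 :=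
  vecH u n - zsmul (zdot (vecH u n) (nuv R n)) (nuv R n)

/-- Tangential derivative `∂_tan u^E(n) = (u(n) − u(m_Ω(n))) ∧ ν(n)`. -/
noncomputable def dtanE (R : Z3) (u : Fam) (n : Z3) : C3 :=
  zcross (vecE u n - vecE u (mOm R n)) (nuv R n)

noncomputable def dtanH (R : Z3) (u : Fam) (n : Z3) : C3 :=
  zcross (vecH u n - vecH u (mOm R n)) (nuv R n)

/-- The discrete rotational `M v = (2i)⁻¹ ∇ₘ × v`. -/
noncomputable def Mcurl (v1 v2 v3 : Z3 → ℂ) (n : Z3) : C3 :=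
  ((2 * Complex.I)⁻¹ * (-(v2 (n + e3) - v2 (n - e3)) + (v3 (n + e2) - v3 (n - e2))),
   (2 * Complex.I)⁻¹ * ((v1 (n + e3) - v1 (n - e3)) - (v3 (n + e1) - v3 (n - e1))),
   (2 * Complex.I)⁻¹ * (-(v1 (n + e2) - v1 (n - e2)) + (v2 (n + e1) - v2 (n - e1))))

/-- `u` solves the Maxwell system with potential `V` at `n`:
`M u^E = V^H u^H` and `M u^H = −V^E u^E`. -/
noncomputable def MaxwellAt (V : Pot) (u : Fam) (n : Z3) : Prop :=
  Mcurl u.E1 u.E2 u.E3 n = (V.H1 n * u.H1 n, V.H2 n * u.H2 n, V.H3 n * u.H3 n) ∧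
  Mcurl u.H1 u.H2 u.H3 n = (-(V.E1 n * u.E1 n), -(V.E2 n * u.E2 n), -(V.E3 n * u.E3 n))

/-! Membership in `H(Ω;ℂ⁶)`: components modelled as total functions; equality as
elements of `H(Ω;ℂ⁶)` is agreement of the `j`-th components on `Ω ∪ ⋃_{k≠j} ∂Ω_k`. -/

def dom1 (R : Z3) : Set Z3 := Omega R ∪ bd2 R ∪ bd3 R
def dom2 (R : Z3) : Set Z3 := Omega R ∪ bd1 R ∪ bd3 R
def dom3 (R : Z3) : Set Z3 := Omega R ∪ bd1 R ∪ bd2 R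

/-- `u = u'` as elements of `H(Ω;ℂ⁶)`. -/
def EqOnH (R : Z3) (u u' : Fam) : Prop :=
  (∀ n ∈ dom1 R, u.E1 n = u'.E1 n ∧ u.H1 n = u'.H1 n) ∧
  (∀ n ∈ dom2 R, u.E2 n = u'.E2 n ∧ u.H2 n = u'.H2 n) ∧
  (∀ n ∈ dom3 R, u.E3 n = u'.E3 n ∧ u.H3 n = u'.H3 n)

/-- Admissibility of boundary data on `Γ`: `f(n)·ν(n) = 0` on `Γ`. -/
noncomputable def AdmOn (R : Z3) (Γ : Set Z3) (f : Z3 → C3) : Prop :=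
  ∀ n ∈ Γ, zdot (f n) (nuv R n) = 0

/-! Cones and half-spaces. -/

def Cminus (N : Z3) : Set Z3 := {m | m.1 ≤ N.1 - |N.2.1 - m.2.1| - |N.2.2 - m.2.2|}
def Cplus (N : Z3) : Set Z3 := {m | N.1 + |N.2.1 - m.2.1| + |N.2.2 - m.2.2| ≤ m.1}
def Eminus (p : ℤ) : Set Z3 := {n | n.1 + n.2.1 < p}
def Eplus (p : ℤ) : Set Z3 := {n | p < n.1 + n.2.1}
def Ezero (p : ℤ) : Set Z3 := {n | n.1 + n.2.1 = p}

/-- `m'` is a lattice neighbour of `m`. -/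
def adj (m m' : Z3) : Prop :=
  m' = m + e1 ∨ m' = m - e1 ∨ m' = m + e2 ∨ m' = m - e2 ∨ m' = m + e3 ∨ m' = m - e3

/-! The special solution data. -/

/-- `ph τ p n = i^{n₃} e^{τ n₃} δ_p(n₂)`. -/
noncomputable def ph (τ : ℝ) (p : ℤ) (n : Z3) : ℂ :=
  Complex.I ^ n.2.2 * (Real.exp (τ * (n.2.2 : ℝ)) : ℂ) * (if n.2.1 = p then 1 else 0)

/-- `w` is the special solution associated with `V`, `τ`, `p`. -/
def SpecialSol (V : Pot) (τ : ℝ) (p : ℤ) (w : Fam) : Prop :=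
  (∀ n : Z3, n.1 = -1 → w.E2 n = 0 ∧ w.E3 n = 0 ∧ w.H2 n = 0 ∧ w.H3 n = 0) ∧
  (∀ n : Z3, n.1 = 0 →
      w.H1 n = ph τ p n ∧ w.H2 n = -ph τ p n ∧ w.E1 n = -ph τ p n ∧ w.E2 n = ph τ p n ∧
      w.E3 n = 0 ∧ w.H3 n = 0) ∧
  (∀ n : Z3, 0 ≤ n.1 → Req V w n)

/-- `A^s(n₁,p,n₃) = ∏_{j=-1}^{n₁} V₂^s(j-1,p-j+1,n₃) / V₁^s(j,p-j,n₃)`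
(the empty product, `= 1`, for `n₁ ≤ -2`). -/
noncomputable def Afun (V2 V1 : Z3 → ℂ) (p n1 n3 : ℤ) : ℂ :=
  ∏ j ∈ Finset.Icc (-1 : ℤ) n1, V2 (j - 1, p - j + 1, n3) / V1 (j, p - j, n3)

/-- `K^s_τ(n₁,p,n₃) = A^s(n₁,p,n₃+1) + e^{-2τ} A^s(n₁,p,n₃-1)`. -/
noncomputable def Kfun (V2 V1 : Z3 → ℂ) (τ : ℝ) (p n1 n3 : ℤ) : ℂ :=
  Afun V2 V1 p n1 (n3 + 1) + (Real.exp (-2 * τ) : ℂ) * Afun V2 V1 p n1 (n3 - 1)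

/-! Statement 2: unique solvability of the mixed boundary value problem
(Dirichlet data on `∂Ω ∖ ∂Ω₁⁺`, Neumann data on `∂Ω₁⁻`). -/

/-- `u` solves the Maxwell system with potential `V` in `Ω`, with `u_tan = (fE,fH)`
on `∂Ω ∖ ∂Ω₁⁺` and `∂_tan u = (gE,gH)` on `∂Ω₁⁻`. -/
noncomputable def MixedSol (R : Z3) (V : Pot) (fE fH gE gH : Z3 → C3) (u : Fam) : Prop :=
  (∀ n ∈ Omega R, MaxwellAt V u n) ∧
  (∀ n ∈ bd R \ bd1p R, tanE R u n = fE n ∧ tanH R u n = fH n) ∧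
  (∀ n ∈ bd1m R, dtanE R u n = gE n ∧ dtanH R u n = gH n)
namespace St2

/-- Slice data: values of (E2,E3,H2,H3) on a 2d slice. -/
structure Sl where
  e2 : ℤ × ℤ → ℂ
  e3 : ℤ × ℤ → ℂ
  h2 : ℤ × ℤ → ℂ
  h3 : ℤ × ℤ → ℂ

abbrev cor (R : Z3) (y z : ℤ) : Prop := 1 ≤ y ∧ y ≤ R.2.1 ∧ 1 ≤ z ∧ z ≤ R.2.2

section Defs
variable (R : Z3) (V : Pot) (fE fH gE gH : Z3 → C3)

noncomputable def L2 (x : ℤ) (q : Sl) (y z : ℤ) : ℂ :=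
  if cor R y z then q.h2 (y, z) else (fH (x, y, z)).2.1
noncomputable def L3 (x : ℤ) (q : Sl) (y z : ℤ) : ℂ :=
  if cor R y z then q.h3 (y, z) else (fH (x, y, z)).2.2
noncomputable def M2 (x : ℤ) (q : Sl) (y z : ℤ) : ℂ :=
  if cor R y z then q.e2 (y, z) else (fE (x, y, z)).2.1
noncomputable def M3 (x : ℤ) (q : Sl) (y z : ℤ) : ℂ :=
  if cor R y z then q.e3 (y, z) else (fE (x, y, z)).2.2

noncomputable def LE1 (x : ℤ) (q : Sl) (y z : ℤ) : ℂ :=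
  if cor R y z then
    (-(2 * Complex.I * V.E1 (x, y, z)))⁻¹ *
      (L3 R fH x q (y+1) z - L3 R fH x q (y-1) z
        - L2 R fH x q y (z+1) + L2 R fH x q y (z-1))
  else (fE (x, y, z)).1

noncomputable def LH1 (x : ℤ) (q : Sl) (y z : ℤ) : ℂ :=
  if cor R y z then
    (2 * Complex.I * V.H1 (x, y, z))⁻¹ *
      (M3 R fE x q (y+1) z - M3 R fE x q (y-1) z
        - M2 R fE x q y (z+1) + M2 R fE x q y (z-1))
  else (fH (x, y, z)).1

noncomputable def step (x : ℤ) (p q : Sl) : Sl where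
  e2 := fun w => 2 * Complex.I * V.H3 (x, w.1, w.2) * q.h3 w
    + LE1 R V fE fH x q (w.1+1) w.2 - LE1 R V fE fH x q (w.1-1) w.2 + p.e2 w
  e3 := fun w => -(2 * Complex.I * V.H2 (x, w.1, w.2) * q.h2 w)
    + LE1 R V fE fH x q w.1 (w.2+1) - LE1 R V fE fH x q w.1 (w.2-1) + p.e3 w
  h2 := fun w => -(2 * Complex.I * V.E3 (x, w.1, w.2) * q.e3 w)
    + LH1 R V fE fH x q (w.1+1) w.2 - LH1 R V fE fH x q (w.1-1) w.2 + p.h2 w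
  h3 := fun w => 2 * Complex.I * V.E2 (x, w.1, w.2) * q.e2 w
    + LH1 R V fE fH x q w.1 (w.2+1) - LH1 R V fE fH x q w.1 (w.2-1) + p.h3 w

noncomputable def SS : ℕ → Sl
  | 0 => ⟨fun w => (fE (0, w.1, w.2)).2.1, fun w => (fE (0, w.1, w.2)).2.2,
          fun w => (fH (0, w.1, w.2)).2.1, fun w => (fH (0, w.1, w.2)).2.2⟩
  | 1 => ⟨fun w => (fE (0, w.1, w.2)).2.1 - (gE (0, w.1, w.2)).2.2,
          fun w => (fE (0, w.1, w.2)).2.2 + (gE (0, w.1, w.2)).2.1,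
          fun w => (fH (0, w.1, w.2)).2.1 - (gH (0, w.1, w.2)).2.2,
          fun w => (fH (0, w.1, w.2)).2.2 + (gH (0, w.1, w.2)).2.1⟩
  | (k+2) => step R V fE fH ((k : ℤ)+1) (SS k) (SS (k+1))

noncomputable def F2 (n : Z3) : ℂ :=
  if cor R n.2.1 n.2.2 ∧ 0 ≤ n.1 then (SS R V fE fH gE gH n.1.toNat).e2 n.2 else (fE n).2.1
noncomputable def F3 (n : Z3) : ℂ :=
  if cor R n.2.1 n.2.2 ∧ 0 ≤ n.1 then (SS R V fE fH gE gH n.1.toNat).e3 n.2 else (fE n).2.2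
noncomputable def G2 (n : Z3) : ℂ :=
  if cor R n.2.1 n.2.2 ∧ 0 ≤ n.1 then (SS R V fE fH gE gH n.1.toNat).h2 n.2 else (fH n).2.1
noncomputable def G3 (n : Z3) : ℂ :=
  if cor R n.2.1 n.2.2 ∧ 0 ≤ n.1 then (SS R V fE fH gE gH n.1.toNat).h3 n.2 else (fH n).2.2

noncomputable def F1 (n : Z3) : ℂ :=
  if cor R n.2.1 n.2.2 ∧ 1 ≤ n.1 then
    (-(2 * Complex.I * V.E1 n))⁻¹ *
      (G3 R V fE fH gE gH (n + e2) - G3 R V fE fH gE gH (n - e2)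
        - G2 R V fE fH gE gH (n + e3) + G2 R V fE fH gE gH (n - e3))
  else (fE n).1

noncomputable def G1 (n : Z3) : ℂ :=
  if cor R n.2.1 n.2.2 ∧ 1 ≤ n.1 then
    (2 * Complex.I * V.H1 n)⁻¹ *
      (F3 R V fE fH gE gH (n + e2) - F3 R V fE fH gE gH (n - e2)
        - F2 R V fE fH gE gH (n + e3) + F2 R V fE fH gE gH (n - e3))
  else (fH n).1

noncomputable def uc : Fam :=
  ⟨F1 R V fE fH gE gH, F2 R V fE fH gE gH, F3 R V fE fH gE gH,
   G1 R V fE fH gE gH, G2 R V fE fH gE gH, G3 R V fE fH gE gH⟩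

end Defs

-- point arithmetic
@[simp] lemma pa1 (x y z : ℤ) : ((x,y,z) : Z3) + e1 = (x+1,y,z) := by
  simp [e1, Prod.ext_iff]
@[simp] lemma pa2 (x y z : ℤ) : ((x,y,z) : Z3) + e2 = (x,y+1,z) := by
  simp [e2, Prod.ext_iff]
@[simp] lemma pa3 (x y z : ℤ) : ((x,y,z) : Z3) + e3 = (x,y,z+1) := by
  simp [e3, Prod.ext_iff]
@[simp] lemma ps1 (x y z : ℤ) : ((x,y,z) : Z3) - e1 = (x-1,y,z) := by
  simp [e1, Prod.ext_iff]
@[simp] lemma ps2 (x y z : ℤ) : ((x,y,z) : Z3) - e2 = (x,y-1,z) := by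
  simp [e2, Prod.ext_iff]
@[simp] lemma ps3 (x y z : ℤ) : ((x,y,z) : Z3) - e3 = (x,y,z-1) := by
  simp [e3, Prod.ext_iff]

end St2
namespace St2
section Eqs
variable (R : Z3) (V : Pot) (fE fH gE gH : Z3 → C3)

lemma F2_L {x : ℤ} (hx : 0 ≤ x) (y z : ℤ) :
    F2 R V fE fH gE gH (x,y,z) = M2 R fE x (SS R V fE fH gE gH x.toNat) y z := by
  simp [F2, M2, hx]
lemma F3_L {x : ℤ} (hx : 0 ≤ x) (y z : ℤ) :
    F3 R V fE fH gE gH (x,y,z) = M3 R fE x (SS R V fE fH gE gH x.toNat) y z := by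
  simp [F3, M3, hx]
lemma G2_L {x : ℤ} (hx : 0 ≤ x) (y z : ℤ) :
    G2 R V fE fH gE gH (x,y,z) = L2 R fH x (SS R V fE fH gE gH x.toNat) y z := by
  simp [G2, L2, hx]
lemma G3_L {x : ℤ} (hx : 0 ≤ x) (y z : ℤ) :
    G3 R V fE fH gE gH (x,y,z) = L3 R fH x (SS R V fE fH gE gH x.toNat) y z := by
  simp [G3, L3, hx]

lemma F1_L {x : ℤ} (hx : 1 ≤ x) (y z : ℤ) :
    F1 R V fE fH gE gH (x,y,z) = LE1 R V fE fH x (SS R V fE fH gE gH x.toNat) y z := by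
  have hx0 : (0:ℤ) ≤ x := by omega
  simp only [F1, LE1, hx, and_true, pa2, ps2, pa3, ps3,
    G3_L R V fE fH gE gH hx0, G2_L R V fE fH gE gH hx0]

lemma G1_L {x : ℤ} (hx : 1 ≤ x) (y z : ℤ) :
    G1 R V fE fH gE gH (x,y,z) = LH1 R V fE fH x (SS R V fE fH gE gH x.toNat) y z := by
  have hx0 : (0:ℤ) ≤ x := by omega
  simp only [G1, LH1, hx, and_true, pa2, ps2, pa3, ps3,
    F3_L R V fE fH gE gH hx0, F2_L R V fE fH gE gH hx0]

lemma rec_e2 {x y z : ℤ} (hx : 1 ≤ x) (hc : cor R y z) :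
    F2 R V fE fH gE gH (x+1,y,z)
      = 2*Complex.I*V.H3 (x,y,z) * G3 R V fE fH gE gH (x,y,z)
        + F1 R V fE fH gE gH (x,y+1,z) - F1 R V fE fH gE gH (x,y-1,z)
        + F2 R V fE fH gE gH (x-1,y,z) := by
  obtain ⟨k, rfl⟩ : ∃ k : ℕ, x = (k:ℤ)+1 := ⟨(x-1).toNat, by omega⟩
  have hx0 : (0:ℤ) ≤ (k:ℤ)+1 := by omega
  have h1 : ((k:ℤ)+1).toNat = k+1 := by omega
  have h2 : ((k:ℤ)+1+1).toNat = k+2 := by omega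
  have h0 : ((k:ℤ)+1-1).toNat = k := by omega
  rw [F1_L R V fE fH gE gH hx (y+1) z, F1_L R V fE fH gE gH hx (y-1) z,
      G3_L R V fE fH gE gH hx0 y z]
  simp only [F2, h1, h2, h0]
  rw [if_pos (show cor R y z ∧ (0:ℤ) ≤ (k:ℤ)+1+1 from ⟨hc, by omega⟩),
      if_pos (show cor R y z ∧ (0:ℤ) ≤ (k:ℤ)+1-1 from ⟨hc, by omega⟩)]
  simp only [SS, step, L3, if_pos hc]

end Eqs
end St2
namespace St2
section Eqs2
variable (R : Z3) (V : Pot) (fE fH gE gH : Z3 → C3)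

lemma rec_e3 {x y z : ℤ} (hx : 1 ≤ x) (hc : cor R y z) :
    F3 R V fE fH gE gH (x+1,y,z)
      = -(2*Complex.I*V.H2 (x,y,z) * G2 R V fE fH gE gH (x,y,z))
        + F1 R V fE fH gE gH (x,y,z+1) - F1 R V fE fH gE gH (x,y,z-1)
        + F3 R V fE fH gE gH (x-1,y,z) := by
  obtain ⟨k, rfl⟩ : ∃ k : ℕ, x = (k:ℤ)+1 := ⟨(x-1).toNat, by omega⟩
  have hx0 : (0:ℤ) ≤ (k:ℤ)+1 := by omega
  have h1 : ((k:ℤ)+1).toNat = k+1 := by omega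
  have h2 : ((k:ℤ)+1+1).toNat = k+2 := by omega
  have h0 : ((k:ℤ)+1-1).toNat = k := by omega
  rw [F1_L R V fE fH gE gH hx y (z+1), F1_L R V fE fH gE gH hx y (z-1),
      G2_L R V fE fH gE gH hx0 y z]
  simp only [F3, h1, h2, h0]
  rw [if_pos (show cor R y z ∧ (0:ℤ) ≤ (k:ℤ)+1+1 from ⟨hc, by omega⟩),
      if_pos (show cor R y z ∧ (0:ℤ) ≤ (k:ℤ)+1-1 from ⟨hc, by omega⟩)]
  simp only [SS, step, L2, if_pos hc]

lemma rec_h2 {x y z : ℤ} (hx : 1 ≤ x) (hc : cor R y z) :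
    G2 R V fE fH gE gH (x+1,y,z)
      = -(2*Complex.I*V.E3 (x,y,z) * F3 R V fE fH gE gH (x,y,z))
        + G1 R V fE fH gE gH (x,y+1,z) - G1 R V fE fH gE gH (x,y-1,z)
        + G2 R V fE fH gE gH (x-1,y,z) := by
  obtain ⟨k, rfl⟩ : ∃ k : ℕ, x = (k:ℤ)+1 := ⟨(x-1).toNat, by omega⟩
  have hx0 : (0:ℤ) ≤ (k:ℤ)+1 := by omega
  have h1 : ((k:ℤ)+1).toNat = k+1 := by omega
  have h2 : ((k:ℤ)+1+1).toNat = k+2 := by omega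
  have h0 : ((k:ℤ)+1-1).toNat = k := by omega
  rw [G1_L R V fE fH gE gH hx (y+1) z, G1_L R V fE fH gE gH hx (y-1) z,
      F3_L R V fE fH gE gH hx0 y z]
  simp only [G2, h1, h2, h0]
  rw [if_pos (show cor R y z ∧ (0:ℤ) ≤ (k:ℤ)+1+1 from ⟨hc, by omega⟩),
      if_pos (show cor R y z ∧ (0:ℤ) ≤ (k:ℤ)+1-1 from ⟨hc, by omega⟩)]
  simp only [SS, step, M3, if_pos hc]

lemma rec_h3 {x y z : ℤ} (hx : 1 ≤ x) (hc : cor R y z) :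
    G3 R V fE fH gE gH (x+1,y,z)
      = 2*Complex.I*V.E2 (x,y,z) * F2 R V fE fH gE gH (x,y,z)
        + G1 R V fE fH gE gH (x,y,z+1) - G1 R V fE fH gE gH (x,y,z-1)
        + G3 R V fE fH gE gH (x-1,y,z) := by
  obtain ⟨k, rfl⟩ : ∃ k : ℕ, x = (k:ℤ)+1 := ⟨(x-1).toNat, by omega⟩
  have hx0 : (0:ℤ) ≤ (k:ℤ)+1 := by omega
  have h1 : ((k:ℤ)+1).toNat = k+1 := by omega
  have h2 : ((k:ℤ)+1+1).toNat = k+2 := by omega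
  have h0 : ((k:ℤ)+1-1).toNat = k := by omega
  rw [G1_L R V fE fH gE gH hx y (z+1), G1_L R V fE fH gE gH hx y (z-1),
      F2_L R V fE fH gE gH hx0 y z]
  simp only [G3, h1, h2, h0]
  rw [if_pos (show cor R y z ∧ (0:ℤ) ≤ (k:ℤ)+1+1 from ⟨hc, by omega⟩),
      if_pos (show cor R y z ∧ (0:ℤ) ≤ (k:ℤ)+1-1 from ⟨hc, by omega⟩)]
  simp only [SS, step, M2, if_pos hc]

end Eqs2
end St2
namespace St2
section Max
variable (R : Z3) (V : Pot) (fE fH gE gH : Z3 → C3)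

@[simp] lemma uc_E1 : (uc R V fE fH gE gH).E1 = F1 R V fE fH gE gH := rfl
@[simp] lemma uc_E2 : (uc R V fE fH gE gH).E2 = F2 R V fE fH gE gH := rfl
@[simp] lemma uc_E3 : (uc R V fE fH gE gH).E3 = F3 R V fE fH gE gH := rfl
@[simp] lemma uc_H1 : (uc R V fE fH gE gH).H1 = G1 R V fE fH gE gH := rfl
@[simp] lemma uc_H2 : (uc R V fE fH gE gH).H2 = G2 R V fE fH gE gH := rfl
@[simp] lemma uc_H3 : (uc R V fE fH gE gH).H3 = G3 R V fE fH gE gH := rfl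

lemma maxwell_uc (hV : PotInv (Omega R) V) :
    ∀ n ∈ Omega R, MaxwellAt V (uc R V fE fH gE gH) n := by
  rintro ⟨x, y, z⟩ hn
  obtain ⟨h1, h2, h3, h4, h5, h6⟩ := hV _ hn
  simp only [Omega, Set.mem_setOf_eq] at hn
  obtain ⟨hx1, hx2, hy1, hy2, hz1, hz2⟩ := hn
  have hc : cor R y z := ⟨hy1, hy2, hz1, hz2⟩
  constructor
  · simp only [Mcurl, uc_E1, uc_E2, uc_E3, uc_H1, uc_H2, uc_H3,
      pa1, pa2, pa3, ps1, ps2, ps3, Prod.mk.injEq]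
    refine ⟨?_, ?_, ?_⟩
    · rw [G1, if_pos (show cor R y z ∧ (1:ℤ) ≤ x from ⟨hc, hx1⟩)]
      simp only [pa2, pa3, ps2, ps3]
      field_simp
      ring
    · rw [rec_e3 R V fE fH gE gH hx1 hc]
      field_simp
      ring
    · rw [rec_e2 R V fE fH gE gH hx1 hc]
      field_simp
      ring
  · simp only [Mcurl, uc_E1, uc_E2, uc_E3, uc_H1, uc_H2, uc_H3,
      pa1, pa2, pa3, ps1, ps2, ps3, Prod.mk.injEq]
    refine ⟨?_, ?_, ?_⟩
    · rw [F1, if_pos (show cor R y z ∧ (1:ℤ) ≤ x from ⟨hc, hx1⟩)]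
      simp only [pa2, pa3, ps2, ps3]
      field_simp
      ring
    · rw [rec_h3 R V fE fH gE gH hx1 hc]
      field_simp
      ring
    · rw [rec_h2 R V fE fH gE gH hx1 hc]
      field_simp
      ring

end Max
end St2
namespace St2
section Geo
variable (R : Z3)

lemma nuv_x0 (y z : ℤ) : nuv R (0,y,z) = (-1,0,0) := by simp [nuv]

lemma nuv_y0 {x : ℤ} (hx1 : 1 ≤ x) (hx2 : x ≤ R.1) (z : ℤ) :
    nuv R (x,0,z) = (0,-1,0) := by
  simp only [nuv]
  rw [if_neg (by omega), if_neg (by omega)]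
  simp

lemma nuv_yR {x : ℤ} (hx1 : 1 ≤ x) (hx2 : x ≤ R.1) (hR2 : 1 ≤ R.2.1) (z : ℤ) :
    nuv R (x,R.2.1+1,z) = (0,1,0) := by
  simp only [nuv]
  rw [if_neg (by omega), if_neg (by omega), if_neg (by omega)]
  simp

lemma nuv_z0 {x y : ℤ} (hx1 : 1 ≤ x) (hx2 : x ≤ R.1) (hy1 : 1 ≤ y) (hy2 : y ≤ R.2.1) :
    nuv R (x,y,0) = (0,0,-1) := by
  simp only [nuv]
  rw [if_neg (by omega), if_neg (by omega), if_neg (by omega), if_neg (by omega)]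
  simp

lemma nuv_zR {x y : ℤ} (hx1 : 1 ≤ x) (hx2 : x ≤ R.1) (hy1 : 1 ≤ y) (hy2 : y ≤ R.2.1)
    (hR3 : 1 ≤ R.2.2) :
    nuv R (x,y,R.2.2+1) = (0,0,1) := by
  simp only [nuv]
  rw [if_neg (by omega), if_neg (by omega), if_neg (by omega), if_neg (by omega),
    if_neg (by omega)]

lemma tsub_xm (a : C3) : a - zsmul (zdot a ((-1:ℤ),0,0)) ((-1:ℤ),0,0) = (0, a.2.1, a.2.2) := by
  obtain ⟨a1, a2, a3⟩ := a
  simp only [zdot, zsmul, Prod.mk_sub_mk, Prod.mk.injEq]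
  push_cast
  refine ⟨by ring, by ring, by ring⟩

lemma tsub_ym (a : C3) : a - zsmul (zdot a (0,(-1:ℤ),0)) (0,(-1:ℤ),0) = (a.1, 0, a.2.2) := by
  obtain ⟨a1, a2, a3⟩ := a
  simp only [zdot, zsmul, Prod.mk_sub_mk, Prod.mk.injEq]
  push_cast
  refine ⟨by ring, by ring, by ring⟩

lemma tsub_yp (a : C3) : a - zsmul (zdot a (0,(1:ℤ),0)) (0,(1:ℤ),0) = (a.1, 0, a.2.2) := by
  obtain ⟨a1, a2, a3⟩ := a
  simp only [zdot, zsmul, Prod.mk_sub_mk, Prod.mk.injEq]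
  push_cast
  refine ⟨by ring, by ring, by ring⟩

lemma tsub_zm (a : C3) : a - zsmul (zdot a (0,0,(-1:ℤ))) (0,0,(-1:ℤ)) = (a.1, a.2.1, 0) := by
  obtain ⟨a1, a2, a3⟩ := a
  simp only [zdot, zsmul, Prod.mk_sub_mk, Prod.mk.injEq]
  push_cast
  refine ⟨by ring, by ring, by ring⟩

lemma tsub_zp (a : C3) : a - zsmul (zdot a (0,0,(1:ℤ))) (0,0,(1:ℤ)) = (a.1, a.2.1, 0) := by
  obtain ⟨a1, a2, a3⟩ := a
  simp only [zdot, zsmul, Prod.mk_sub_mk, Prod.mk.injEq]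
  push_cast
  refine ⟨by ring, by ring, by ring⟩

lemma cross_xm (a : C3) : zcross a ((-1:ℤ),0,0) = (0, -a.2.2, a.2.1) := by
  obtain ⟨a1, a2, a3⟩ := a
  simp only [zcross, Prod.mk.injEq]
  push_cast
  refine ⟨by ring, by ring, by ring⟩

lemma mOm_x0 (y z : ℤ) : mOm R (0,y,z) = (1,y,z) := by
  simp [mOm, nuv_x0, Prod.ext_iff]

lemma zdot_xm (a : C3) : zdot a ((-1:ℤ),0,0) = -a.1 := by
  simp [zdot]
lemma zdot_ym (a : C3) : zdot a (0,(-1:ℤ),0) = -a.2.1 := by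
  simp [zdot]
lemma zdot_yp (a : C3) : zdot a (0,(1:ℤ),0) = a.2.1 := by
  simp [zdot]
lemma zdot_zm (a : C3) : zdot a (0,0,(-1:ℤ)) = -a.2.2 := by
  simp [zdot]
lemma zdot_zp (a : C3) : zdot a (0,0,(1:ℤ)) = a.2.2 := by
  simp [zdot]

end Geo
end St2
namespace St2
section Bd
variable (R : Z3)

lemma bd_cases {n : Z3} (hR : 1 ≤ R.1 ∧ 1 ≤ R.2.1 ∧ 1 ≤ R.2.2) (h : n ∈ bd R \ bd1p R) :
    (n.1 = 0 ∧ 1 ≤ n.2.1 ∧ n.2.1 ≤ R.2.1 ∧ 1 ≤ n.2.2 ∧ n.2.2 ≤ R.2.2) ∨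
    (1 ≤ n.1 ∧ n.1 ≤ R.1 ∧ (n.2.1 = 0 ∨ n.2.1 = R.2.1+1) ∧ 1 ≤ n.2.2 ∧ n.2.2 ≤ R.2.2) ∨
    (1 ≤ n.1 ∧ n.1 ≤ R.1 ∧ 1 ≤ n.2.1 ∧ n.2.1 ≤ R.2.1 ∧ (n.2.2 = 0 ∨ n.2.2 = R.2.2+1)) := by
  obtain ⟨hb, hnp⟩ := h
  simp only [bd, bd1, bd2, bd3, bd1p, bd1m, bd2p, bd2m, bd3p, bd3m, Set.mem_union,
    Set.mem_setOf_eq] at hb hnp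
  omega

lemma mem_bd1m {y z : ℤ} (hy1 : 1 ≤ y) (hy2 : y ≤ R.2.1) (hz1 : 1 ≤ z) (hz2 : z ≤ R.2.2) :
    ((0:ℤ),y,z) ∈ bd1m R := ⟨rfl, hy1, hy2, hz1, hz2⟩

lemma mem_bd1m_diff (hR1 : 1 ≤ R.1) {n : Z3} (h : n ∈ bd1m R) : n ∈ bd R \ bd1p R := by
  obtain ⟨h0, h1, h2, h3, h4⟩ := h
  exact ⟨Or.inl (Or.inl (Or.inr ⟨h0, h1, h2, h3, h4⟩)), fun hc => by
    have := hc.1; omega⟩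

lemma mem_bd2_diff {x y z : ℤ} (hx1 : 1 ≤ x) (hx2 : x ≤ R.1)
    (hy : y = 0 ∨ y = R.2.1 + 1) (hz1 : 1 ≤ z) (hz2 : z ≤ R.2.2) :
    ((x,y,z) : Z3) ∈ bd R \ bd1p R := by
  refine ⟨Or.inl (Or.inr ?_), fun hc => by have := hc.1; simp at this; omega⟩
  rcases hy with rfl | rfl
  · exact Or.inr ⟨rfl, hx1, hx2, hz1, hz2⟩
  · exact Or.inl ⟨rfl, hx1, hx2, hz1, hz2⟩

lemma mem_bd3_diff {x y z : ℤ} (hx1 : 1 ≤ x) (hx2 : x ≤ R.1)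
    (hy1 : 1 ≤ y) (hy2 : y ≤ R.2.1) (hz : z = 0 ∨ z = R.2.2 + 1) :
    ((x,y,z) : Z3) ∈ bd R \ bd1p R := by
  refine ⟨Or.inr ?_, fun hc => by have := hc.1; simp at this; omega⟩
  rcases hz with rfl | rfl
  · exact Or.inr ⟨rfl, hx1, hx2, hy1, hy2⟩
  · exact Or.inl ⟨rfl, hx1, hx2, hy1, hy2⟩

end Bd
end St2
namespace St2
section BC
variable (R : Z3) (V : Pot) (fE fH gE gH : Z3 → C3)

lemma F_off2 {x y z : ℤ} (hy : y = 0 ∨ y = R.2.1 + 1) :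
    F1 R V fE fH gE gH (x,y,z) = (fE (x,y,z)).1 ∧
    F3 R V fE fH gE gH (x,y,z) = (fE (x,y,z)).2.2 ∧
    G1 R V fE fH gE gH (x,y,z) = (fH (x,y,z)).1 ∧
    G3 R V fE fH gE gH (x,y,z) = (fH (x,y,z)).2.2 := by
  have hnc : ¬ (cor R y z) := by simp only [cor]; omega
  refine ⟨?_, ?_, ?_, ?_⟩ <;>
    · first
      | (rw [F1, if_neg (fun h => hnc h.1)])
      | (rw [F3, if_neg (fun h => hnc h.1)])
      | (rw [G1, if_neg (fun h => hnc h.1)])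
      | (rw [G3, if_neg (fun h => hnc h.1)])

lemma F_off3 {x y z : ℤ} (hz : z = 0 ∨ z = R.2.2 + 1) :
    F1 R V fE fH gE gH (x,y,z) = (fE (x,y,z)).1 ∧
    F2 R V fE fH gE gH (x,y,z) = (fE (x,y,z)).2.1 ∧
    G1 R V fE fH gE gH (x,y,z) = (fH (x,y,z)).1 ∧
    G2 R V fE fH gE gH (x,y,z) = (fH (x,y,z)).2.1 := by
  have hnc : ¬ (cor R y z) := by simp only [cor]; omega
  refine ⟨?_, ?_, ?_, ?_⟩ <;>
    · first
      | (rw [F1, if_neg (fun h => hnc h.1)])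
      | (rw [F2, if_neg (fun h => hnc h.1)])
      | (rw [G1, if_neg (fun h => hnc h.1)])
      | (rw [G2, if_neg (fun h => hnc h.1)])

lemma F_slice0 {y z : ℤ} (hc : cor R y z) :
    F2 R V fE fH gE gH (0,y,z) = (fE (0,y,z)).2.1 ∧
    F3 R V fE fH gE gH (0,y,z) = (fE (0,y,z)).2.2 ∧
    G2 R V fE fH gE gH (0,y,z) = (fH (0,y,z)).2.1 ∧
    G3 R V fE fH gE gH (0,y,z) = (fH (0,y,z)).2.2 := by
  refine ⟨?_, ?_, ?_, ?_⟩
  · rw [F2, if_pos ⟨hc, le_refl (0:ℤ)⟩]; simp [SS]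
  · rw [F3, if_pos ⟨hc, le_refl (0:ℤ)⟩]; simp [SS]
  · rw [G2, if_pos ⟨hc, le_refl (0:ℤ)⟩]; simp [SS]
  · rw [G3, if_pos ⟨hc, le_refl (0:ℤ)⟩]; simp [SS]

lemma F_slice1 {y z : ℤ} (hc : cor R y z) :
    F2 R V fE fH gE gH (1,y,z) = (fE (0,y,z)).2.1 - (gE (0,y,z)).2.2 ∧
    F3 R V fE fH gE gH (1,y,z) = (fE (0,y,z)).2.2 + (gE (0,y,z)).2.1 ∧
    G2 R V fE fH gE gH (1,y,z) = (fH (0,y,z)).2.1 - (gH (0,y,z)).2.2 ∧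
    G3 R V fE fH gE gH (1,y,z) = (fH (0,y,z)).2.2 + (gH (0,y,z)).2.1 := by
  refine ⟨?_, ?_, ?_, ?_⟩
  · rw [F2, if_pos ⟨hc, by omega⟩]; simp [SS]
  · rw [F3, if_pos ⟨hc, by omega⟩]; simp [SS]
  · rw [G2, if_pos ⟨hc, by omega⟩]; simp [SS]
  · rw [G3, if_pos ⟨hc, by omega⟩]; simp [SS]

lemma tan_uc (hR : 1 ≤ R.1 ∧ 1 ≤ R.2.1 ∧ 1 ≤ R.2.2)
    (hfE : AdmOn R (bd R \ bd1p R) fE) (hfH : AdmOn R (bd R \ bd1p R) fH) :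
    ∀ n ∈ bd R \ bd1p R,
      tanE R (uc R V fE fH gE gH) n = fE n ∧ tanH R (uc R V fE fH gE gH) n = fH n := by
  rintro ⟨x, y, z⟩ hn
  have hE := hfE _ hn
  have hH := hfH _ hn
  rcases bd_cases R hR hn with ⟨h0, hy1, hy2, hz1, hz2⟩ |
    ⟨hx1, hx2, hy, hz1, hz2⟩ | ⟨hx1, hx2, hy1, hy2, hz⟩
  · -- face bd1m
    obtain rfl : x = 0 := h0
    have hc : cor R y z := ⟨hy1, hy2, hz1, hz2⟩
    obtain ⟨hf2, hf3, hg2, hg3⟩ := F_slice0 R V fE fH gE gH hc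
    rw [nuv_x0, zdot_xm] at hE hH
    constructor
    · rw [tanE, nuv_x0, tsub_xm]
      simp only [vecE, uc_E2, uc_E3, Prod.ext_iff]
      exact ⟨(neg_eq_zero.mp hE).symm, hf2, hf3⟩
    · rw [tanH, nuv_x0, tsub_xm]
      simp only [vecH, uc_H2, uc_H3, Prod.ext_iff]
      exact ⟨(neg_eq_zero.mp hH).symm, hg2, hg3⟩
  · -- face bd2
    rcases hy with h | h
    · obtain rfl : y = 0 := h
      obtain ⟨hf1, hf3, hg1, hg3⟩ := @F_off2 R V fE fH gE gH x 0 z (Or.inl rfl)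
      rw [nuv_y0 R hx1 hx2, zdot_ym] at hE hH
      constructor
      · rw [tanE, nuv_y0 R hx1 hx2, tsub_ym]
        simp only [vecE, uc_E1, uc_E3, Prod.ext_iff]
        exact ⟨hf1, (neg_eq_zero.mp hE).symm, hf3⟩
      · rw [tanH, nuv_y0 R hx1 hx2, tsub_ym]
        simp only [vecH, uc_H1, uc_H3, Prod.ext_iff]
        exact ⟨hg1, (neg_eq_zero.mp hH).symm, hg3⟩
    · obtain rfl : y = R.2.1 + 1 := h
      obtain ⟨hf1, hf3, hg1, hg3⟩ := @F_off2 R V fE fH gE gH x (R.2.1+1) z (Or.inr rfl)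
      rw [nuv_yR R hx1 hx2 hR.2.1, zdot_yp] at hE hH
      constructor
      · rw [tanE, nuv_yR R hx1 hx2 hR.2.1, tsub_yp]
        simp only [vecE, uc_E1, uc_E3, Prod.ext_iff]
        exact ⟨hf1, hE.symm, hf3⟩
      · rw [tanH, nuv_yR R hx1 hx2 hR.2.1, tsub_yp]
        simp only [vecH, uc_H1, uc_H3, Prod.ext_iff]
        exact ⟨hg1, hH.symm, hg3⟩
  · -- face bd3
    rcases hz with h | h
    · obtain rfl : z = 0 := h
      obtain ⟨hf1, hf2, hg1, hg2⟩ := @F_off3 R V fE fH gE gH x y 0 (Or.inl rfl)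
      rw [nuv_z0 R hx1 hx2 hy1 hy2, zdot_zm] at hE hH
      constructor
      · rw [tanE, nuv_z0 R hx1 hx2 hy1 hy2, tsub_zm]
        simp only [vecE, uc_E1, uc_E2, Prod.ext_iff]
        exact ⟨hf1, hf2, (neg_eq_zero.mp hE).symm⟩
      · rw [tanH, nuv_z0 R hx1 hx2 hy1 hy2, tsub_zm]
        simp only [vecH, uc_H1, uc_H2, Prod.ext_iff]
        exact ⟨hg1, hg2, (neg_eq_zero.mp hH).symm⟩
    · obtain rfl : z = R.2.2 + 1 := h
      obtain ⟨hf1, hf2, hg1, hg2⟩ := @F_off3 R V fE fH gE gH x y (R.2.2+1) (Or.inr rfl)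
      rw [nuv_zR R hx1 hx2 hy1 hy2 hR.2.2, zdot_zp] at hE hH
      constructor
      · rw [tanE, nuv_zR R hx1 hx2 hy1 hy2 hR.2.2, tsub_zp]
        simp only [vecE, uc_E1, uc_E2, Prod.ext_iff]
        exact ⟨hf1, hf2, hE.symm⟩
      · rw [tanH, nuv_zR R hx1 hx2 hy1 hy2 hR.2.2, tsub_zp]
        simp only [vecH, uc_H1, uc_H2, Prod.ext_iff]
        exact ⟨hg1, hg2, hH.symm⟩

lemma dtan_uc (hgE : AdmOn R (bd1m R) gE) (hgH : AdmOn R (bd1m R) gH) :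
    ∀ n ∈ bd1m R,
      dtanE R (uc R V fE fH gE gH) n = gE n ∧ dtanH R (uc R V fE fH gE gH) n = gH n := by
  rintro ⟨x, y, z⟩ hn
  have hE := hgE _ hn
  have hH := hgH _ hn
  obtain ⟨h0, hy1, hy2, hz1, hz2⟩ := hn
  obtain rfl : x = 0 := h0
  have hc : cor R y z := ⟨hy1, hy2, hz1, hz2⟩
  obtain ⟨hf2, hf3, hg2, hg3⟩ := F_slice0 R V fE fH gE gH hc
  obtain ⟨hf2', hf3', hg2', hg3'⟩ := F_slice1 R V fE fH gE gH hc
  rw [nuv_x0, zdot_xm] at hE hH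
  constructor
  · rw [dtanE, mOm_x0, nuv_x0, cross_xm]
    simp only [vecE, uc_E2, uc_E3, Prod.mk_sub_mk, Prod.ext_iff]
    refine ⟨(neg_eq_zero.mp hE).symm, ?_, ?_⟩
    · rw [hf3, hf3']; ring
    · rw [hf2, hf2']; ring
  · rw [dtanH, mOm_x0, nuv_x0, cross_xm]
    simp only [vecH, uc_H2, uc_H3, Prod.mk_sub_mk, Prod.ext_iff]
    refine ⟨(neg_eq_zero.mp hH).symm, ?_, ?_⟩
    · rw [hg3, hg3']; ring
    · rw [hg2, hg2']; ring

lemma mixed_uc (hR : 1 ≤ R.1 ∧ 1 ≤ R.2.1 ∧ 1 ≤ R.2.2) (hV : PotInv (Omega R) V)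
    (hfE : AdmOn R (bd R \ bd1p R) fE) (hfH : AdmOn R (bd R \ bd1p R) fH)
    (hgE : AdmOn R (bd1m R) gE) (hgH : AdmOn R (bd1m R) gH) :
    MixedSol R V fE fH gE gH (uc R V fE fH gE gH) :=
  ⟨maxwell_uc R V fE fH gE gH hV, tan_uc R V fE fH gE gH hR hfE hfH,
   dtan_uc R V fE fH gE gH hgE hgH⟩

end BC
end St2
namespace St2
section Sol
variable (R : Z3) (V : Pot) (fE fH gE gH : Z3 → C3) (u : Fam)

lemma mem_Omega {x y z : ℤ} (hx1 : 1 ≤ x) (hx2 : x ≤ R.1) (hc : cor R y z) :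
    ((x,y,z) : Z3) ∈ Omega R := ⟨hx1, hx2, hc.1, hc.2.1, hc.2.2.1, hc.2.2.2⟩

lemma two_I_ne : (2 * Complex.I : ℂ) ≠ 0 := by
  simp [Complex.I_ne_zero]

lemma sol_bd2 (hu : MixedSol R V fE fH gE gH u) (hR : 1 ≤ R.1 ∧ 1 ≤ R.2.1 ∧ 1 ≤ R.2.2)
    {x y z : ℤ} (hx1 : 1 ≤ x) (hx2 : x ≤ R.1) (hy : y = 0 ∨ y = R.2.1 + 1)
    (hz1 : 1 ≤ z) (hz2 : z ≤ R.2.2) :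
    u.E1 (x,y,z) = (fE (x,y,z)).1 ∧ u.E3 (x,y,z) = (fE (x,y,z)).2.2 ∧
    u.H1 (x,y,z) = (fH (x,y,z)).1 ∧ u.H3 (x,y,z) = (fH (x,y,z)).2.2 := by
  have hmem := mem_bd2_diff R hx1 hx2 hy hz1 hz2
  obtain ⟨htE, htH⟩ := hu.2.1 _ hmem
  rcases hy with rfl | rfl
  · rw [tanE, nuv_y0 R hx1 hx2, tsub_ym] at htE
    rw [tanH, nuv_y0 R hx1 hx2, tsub_ym] at htH
    exact ⟨congrArg Prod.fst htE, congrArg (fun p => p.2.2) htE,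
      congrArg Prod.fst htH, congrArg (fun p => p.2.2) htH⟩
  · rw [tanE, nuv_yR R hx1 hx2 hR.2.1, tsub_yp] at htE
    rw [tanH, nuv_yR R hx1 hx2 hR.2.1, tsub_yp] at htH
    exact ⟨congrArg Prod.fst htE, congrArg (fun p => p.2.2) htE,
      congrArg Prod.fst htH, congrArg (fun p => p.2.2) htH⟩

lemma sol_bd3 (hu : MixedSol R V fE fH gE gH u) (hR : 1 ≤ R.1 ∧ 1 ≤ R.2.1 ∧ 1 ≤ R.2.2)
    {x y z : ℤ} (hx1 : 1 ≤ x) (hx2 : x ≤ R.1) (hy1 : 1 ≤ y) (hy2 : y ≤ R.2.1)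
    (hz : z = 0 ∨ z = R.2.2 + 1) :
    u.E1 (x,y,z) = (fE (x,y,z)).1 ∧ u.E2 (x,y,z) = (fE (x,y,z)).2.1 ∧
    u.H1 (x,y,z) = (fH (x,y,z)).1 ∧ u.H2 (x,y,z) = (fH (x,y,z)).2.1 := by
  have hmem := mem_bd3_diff R hx1 hx2 hy1 hy2 hz
  obtain ⟨htE, htH⟩ := hu.2.1 _ hmem
  rcases hz with rfl | rfl
  · rw [tanE, nuv_z0 R hx1 hx2 hy1 hy2, tsub_zm] at htE
    rw [tanH, nuv_z0 R hx1 hx2 hy1 hy2, tsub_zm] at htH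
    exact ⟨congrArg Prod.fst htE, congrArg (fun p => p.2.1) htE,
      congrArg Prod.fst htH, congrArg (fun p => p.2.1) htH⟩
  · rw [tanE, nuv_zR R hx1 hx2 hy1 hy2 hR.2.2, tsub_zp] at htE
    rw [tanH, nuv_zR R hx1 hx2 hy1 hy2 hR.2.2, tsub_zp] at htH
    exact ⟨congrArg Prod.fst htE, congrArg (fun p => p.2.1) htE,
      congrArg Prod.fst htH, congrArg (fun p => p.2.1) htH⟩

lemma sol_bd1m (hu : MixedSol R V fE fH gE gH u) (hR : 1 ≤ R.1 ∧ 1 ≤ R.2.1 ∧ 1 ≤ R.2.2)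
    {y z : ℤ} (hc : cor R y z) :
    u.E2 (0,y,z) = (fE (0,y,z)).2.1 ∧ u.E3 (0,y,z) = (fE (0,y,z)).2.2 ∧
    u.H2 (0,y,z) = (fH (0,y,z)).2.1 ∧ u.H3 (0,y,z) = (fH (0,y,z)).2.2 := by
  have hmem := mem_bd1m_diff R hR.1 (mem_bd1m R hc.1 hc.2.1 hc.2.2.1 hc.2.2.2)
  obtain ⟨htE, htH⟩ := hu.2.1 _ hmem
  rw [tanE, nuv_x0, tsub_xm] at htE
  rw [tanH, nuv_x0, tsub_xm] at htH
  exact ⟨congrArg (fun p => p.2.1) htE, congrArg (fun p => p.2.2) htE,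
    congrArg (fun p => p.2.1) htH, congrArg (fun p => p.2.2) htH⟩

lemma sol_slice1 (hu : MixedSol R V fE fH gE gH u) (hR : 1 ≤ R.1 ∧ 1 ≤ R.2.1 ∧ 1 ≤ R.2.2)
    {y z : ℤ} (hc : cor R y z) :
    u.E2 (1,y,z) = (fE (0,y,z)).2.1 - (gE (0,y,z)).2.2 ∧
    u.E3 (1,y,z) = (fE (0,y,z)).2.2 + (gE (0,y,z)).2.1 ∧
    u.H2 (1,y,z) = (fH (0,y,z)).2.1 - (gH (0,y,z)).2.2 ∧
    u.H3 (1,y,z) = (fH (0,y,z)).2.2 + (gH (0,y,z)).2.1 := by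
  have h0 := sol_bd1m R V fE fH gE gH u hu hR hc
  have hmem : ((0:ℤ),y,z) ∈ bd1m R := mem_bd1m R hc.1 hc.2.1 hc.2.2.1 hc.2.2.2
  obtain ⟨hdE, hdH⟩ := hu.2.2 _ hmem
  rw [dtanE, mOm_x0, nuv_x0, cross_xm] at hdE
  rw [dtanH, mOm_x0, nuv_x0, cross_xm] at hdH
  have hE2 : u.E2 (0,y,z) - u.E2 ((1:ℤ),y,z) = (gE (0,y,z)).2.2 :=
    congrArg (fun p => p.2.2) hdE
  have hE3 : -(u.E3 (0,y,z) - u.E3 ((1:ℤ),y,z)) = (gE (0,y,z)).2.1 :=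
    congrArg (fun p => p.2.1) hdE
  have hH2 : u.H2 (0,y,z) - u.H2 ((1:ℤ),y,z) = (gH (0,y,z)).2.2 :=
    congrArg (fun p => p.2.2) hdH
  have hH3 : -(u.H3 (0,y,z) - u.H3 ((1:ℤ),y,z)) = (gH (0,y,z)).2.1 :=
    congrArg (fun p => p.2.1) hdH
  refine ⟨?_, ?_, ?_, ?_⟩
  · linear_combination h0.1 - hE2
  · linear_combination h0.2.1 + hE3
  · linear_combination h0.2.2.1 - hH2
  · linear_combination h0.2.2.2 + hH3

end Sol
end St2
namespace St2
section Sol2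
variable (R : Z3) (V : Pot) (fE fH gE gH : Z3 → C3) (u : Fam)

lemma sol_R1 (hu : MixedSol R V fE fH gE gH u) {x y z : ℤ}
    (hx1 : 1 ≤ x) (hx2 : x ≤ R.1) (hc : cor R y z) :
    u.E2 (x+1,y,z) = 2*Complex.I*V.H3 (x,y,z) * u.H3 (x,y,z)
      + u.E1 (x,y+1,z) - u.E1 (x,y-1,z) + u.E2 (x-1,y,z) := by
  have hm := (hu.1 _ (mem_Omega R hx1 hx2 hc)).1
  simp only [Mcurl, pa1, pa2, pa3, ps1, ps2, ps3, Prod.mk.injEq] at hm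
  have h := hm.2.2
  rw [inv_mul_eq_iff_eq_mul₀ two_I_ne] at h
  linear_combination h

lemma sol_R2 (hu : MixedSol R V fE fH gE gH u) {x y z : ℤ}
    (hx1 : 1 ≤ x) (hx2 : x ≤ R.1) (hc : cor R y z) :
    u.E3 (x+1,y,z) = -(2*Complex.I*V.H2 (x,y,z) * u.H2 (x,y,z))
      + u.E1 (x,y,z+1) - u.E1 (x,y,z-1) + u.E3 (x-1,y,z) := by
  have hm := (hu.1 _ (mem_Omega R hx1 hx2 hc)).1
  simp only [Mcurl, pa1, pa2, pa3, ps1, ps2, ps3, Prod.mk.injEq] at hm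
  have h := hm.2.1
  rw [inv_mul_eq_iff_eq_mul₀ two_I_ne] at h
  linear_combination -h

lemma sol_R3 (hu : MixedSol R V fE fH gE gH u) {x y z : ℤ}
    (hx1 : 1 ≤ x) (hx2 : x ≤ R.1) (hc : cor R y z) :
    u.H2 (x+1,y,z) = -(2*Complex.I*V.E3 (x,y,z) * u.E3 (x,y,z))
      + u.H1 (x,y+1,z) - u.H1 (x,y-1,z) + u.H2 (x-1,y,z) := by
  have hm := (hu.1 _ (mem_Omega R hx1 hx2 hc)).2
  simp only [Mcurl, pa1, pa2, pa3, ps1, ps2, ps3, Prod.mk.injEq] at hm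
  have h := hm.2.2
  rw [inv_mul_eq_iff_eq_mul₀ two_I_ne] at h
  linear_combination h

lemma sol_R4 (hu : MixedSol R V fE fH gE gH u) {x y z : ℤ}
    (hx1 : 1 ≤ x) (hx2 : x ≤ R.1) (hc : cor R y z) :
    u.H3 (x+1,y,z) = 2*Complex.I*V.E2 (x,y,z) * u.E2 (x,y,z)
      + u.H1 (x,y,z+1) - u.H1 (x,y,z-1) + u.H3 (x-1,y,z) := by
  have hm := (hu.1 _ (mem_Omega R hx1 hx2 hc)).2
  simp only [Mcurl, pa1, pa2, pa3, ps1, ps2, ps3, Prod.mk.injEq] at hm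
  have h := hm.2.1
  rw [inv_mul_eq_iff_eq_mul₀ two_I_ne] at h
  linear_combination -h

lemma sol_A1 (hu : MixedSol R V fE fH gE gH u) (hV : PotInv (Omega R) V) {x y z : ℤ}
    (hx1 : 1 ≤ x) (hx2 : x ≤ R.1) (hc : cor R y z) :
    u.E1 (x,y,z) = (-(2*Complex.I*V.E1 (x,y,z)))⁻¹ *
      (u.H3 (x,y+1,z) - u.H3 (x,y-1,z) - u.H2 (x,y,z+1) + u.H2 (x,y,z-1)) := by
  have hne := (hV _ (mem_Omega R hx1 hx2 hc)).1
  have hm := (hu.1 _ (mem_Omega R hx1 hx2 hc)).2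
  simp only [Mcurl, pa1, pa2, pa3, ps1, ps2, ps3, Prod.mk.injEq] at hm
  have h := hm.1
  rw [inv_mul_eq_iff_eq_mul₀ two_I_ne] at h
  rw [eq_comm, inv_mul_eq_iff_eq_mul₀
    (show (-(2*Complex.I*V.E1 ((x:ℤ),y,z))) ≠ 0 by simp [Complex.I_ne_zero, hne])]
  linear_combination h

lemma sol_A2 (hu : MixedSol R V fE fH gE gH u) (hV : PotInv (Omega R) V) {x y z : ℤ}
    (hx1 : 1 ≤ x) (hx2 : x ≤ R.1) (hc : cor R y z) :
    u.H1 (x,y,z) = (2*Complex.I*V.H1 (x,y,z))⁻¹ *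
      (u.E3 (x,y+1,z) - u.E3 (x,y-1,z) - u.E2 (x,y,z+1) + u.E2 (x,y,z-1)) := by
  have hne := (hV _ (mem_Omega R hx1 hx2 hc)).2.2.2.1
  have hm := (hu.1 _ (mem_Omega R hx1 hx2 hc)).1
  simp only [Mcurl, pa1, pa2, pa3, ps1, ps2, ps3, Prod.mk.injEq] at hm
  have h := hm.1
  rw [inv_mul_eq_iff_eq_mul₀ two_I_ne] at h
  rw [eq_comm, inv_mul_eq_iff_eq_mul₀
    (show (2*Complex.I*V.H1 ((x:ℤ),y,z)) ≠ 0 by simp [Complex.I_ne_zero, hne])]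
  linear_combination h

end Sol2
end St2
namespace St2
section Ext
variable (R : Z3) (V : Pot) (fE fH gE gH : Z3 → C3) (u : Fam)

/-- Given the core values of a slice, all extended lookups used in the recursion
agree with the canonical ones. -/
lemma slice_ext (hu : MixedSol R V fE fH gE gH u) (hV : PotInv (Omega R) V)
    (hR : 1 ≤ R.1 ∧ 1 ≤ R.2.1 ∧ 1 ≤ R.2.2) {x : ℤ} (hx1 : 1 ≤ x) (hx2 : x ≤ R.1)
    (q : Sl)
    (hq : ∀ y z, cor R y z → u.E2 (x,y,z) = q.e2 (y,z) ∧ u.E3 (x,y,z) = q.e3 (y,z) ∧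
      u.H2 (x,y,z) = q.h2 (y,z) ∧ u.H3 (x,y,z) = q.h3 (y,z)) :
    (∀ y z, (0 ≤ y ∧ y ≤ R.2.1+1 ∧ 1 ≤ z ∧ z ≤ R.2.2) ∨
        (1 ≤ y ∧ y ≤ R.2.1 ∧ 0 ≤ z ∧ z ≤ R.2.2+1) →
      u.E1 (x,y,z) = LE1 R V fE fH x q y z) ∧
    (∀ y z, (0 ≤ y ∧ y ≤ R.2.1+1 ∧ 1 ≤ z ∧ z ≤ R.2.2) ∨
        (1 ≤ y ∧ y ≤ R.2.1 ∧ 0 ≤ z ∧ z ≤ R.2.2+1) →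
      u.H1 (x,y,z) = LH1 R V fE fH x q y z) := by
  have hL3 : ∀ y z, 0 ≤ y → y ≤ R.2.1+1 → 1 ≤ z → z ≤ R.2.2 →
      u.H3 (x,y,z) = L3 R fH x q y z := by
    intro y z h1 h2 h3 h4
    by_cases hc : cor R y z
    · rw [L3, if_pos hc]; exact (hq y z hc).2.2.2
    · rw [L3, if_neg hc]
      have hy : y = 0 ∨ y = R.2.1+1 := by simp only [cor] at hc; omega
      exact (sol_bd2 R V fE fH gE gH u hu hR hx1 hx2 hy h3 h4).2.2.2
  have hL2 : ∀ y z, 1 ≤ y → y ≤ R.2.1 → 0 ≤ z → z ≤ R.2.2+1 →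
      u.H2 (x,y,z) = L2 R fH x q y z := by
    intro y z h1 h2 h3 h4
    by_cases hc : cor R y z
    · rw [L2, if_pos hc]; exact (hq y z hc).2.2.1
    · rw [L2, if_neg hc]
      have hz : z = 0 ∨ z = R.2.2+1 := by simp only [cor] at hc; omega
      exact (sol_bd3 R V fE fH gE gH u hu hR hx1 hx2 h1 h2 hz).2.2.2
  have hM3 : ∀ y z, 0 ≤ y → y ≤ R.2.1+1 → 1 ≤ z → z ≤ R.2.2 →
      u.E3 (x,y,z) = M3 R fE x q y z := by
    intro y z h1 h2 h3 h4
    by_cases hc : cor R y z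
    · rw [M3, if_pos hc]; exact (hq y z hc).2.1
    · rw [M3, if_neg hc]
      have hy : y = 0 ∨ y = R.2.1+1 := by simp only [cor] at hc; omega
      exact (sol_bd2 R V fE fH gE gH u hu hR hx1 hx2 hy h3 h4).2.1
  have hM2 : ∀ y z, 1 ≤ y → y ≤ R.2.1 → 0 ≤ z → z ≤ R.2.2+1 →
      u.E2 (x,y,z) = M2 R fE x q y z := by
    intro y z h1 h2 h3 h4
    by_cases hc : cor R y z
    · rw [M2, if_pos hc]; exact (hq y z hc).1
    · rw [M2, if_neg hc]
      have hz : z = 0 ∨ z = R.2.2+1 := by simp only [cor] at hc; omega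
      exact (sol_bd3 R V fE fH gE gH u hu hR hx1 hx2 h1 h2 hz).2.1
  constructor
  · intro y z hr
    by_cases hc : cor R y z
    · rw [LE1, if_pos hc]
      rw [sol_A1 R V fE fH gE gH u hu hV hx1 hx2 hc]
      obtain ⟨c1, c2, c3, c4⟩ := hc
      rw [hL3 (y+1) z (by omega) (by omega) (by omega) (by omega),
          hL3 (y-1) z (by omega) (by omega) (by omega) (by omega),
          hL2 y (z+1) (by omega) (by omega) (by omega) (by omega),
          hL2 y (z-1) (by omega) (by omega) (by omega) (by omega)]
    · rw [LE1, if_neg hc]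
      simp only [cor] at hc
      rcases hr with ⟨h1, h2, h3, h4⟩ | ⟨h1, h2, h3, h4⟩
      · have hy : y = 0 ∨ y = R.2.1+1 := by omega
        exact (sol_bd2 R V fE fH gE gH u hu hR hx1 hx2 hy h3 h4).1
      · have hz : z = 0 ∨ z = R.2.2+1 := by omega
        exact (sol_bd3 R V fE fH gE gH u hu hR hx1 hx2 h1 h2 hz).1
  · intro y z hr
    by_cases hc : cor R y z
    · rw [LH1, if_pos hc]
      rw [sol_A2 R V fE fH gE gH u hu hV hx1 hx2 hc]
      obtain ⟨c1, c2, c3, c4⟩ := hc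
      rw [hM3 (y+1) z (by omega) (by omega) (by omega) (by omega),
          hM3 (y-1) z (by omega) (by omega) (by omega) (by omega),
          hM2 y (z+1) (by omega) (by omega) (by omega) (by omega),
          hM2 y (z-1) (by omega) (by omega) (by omega) (by omega)]
    · rw [LH1, if_neg hc]
      simp only [cor] at hc
      rcases hr with ⟨h1, h2, h3, h4⟩ | ⟨h1, h2, h3, h4⟩
      · have hy : y = 0 ∨ y = R.2.1+1 := by omega
        exact (sol_bd2 R V fE fH gE gH u hu hR hx1 hx2 hy h3 h4).2.2.1
      · have hz : z = 0 ∨ z = R.2.2+1 := by omega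
        exact (sol_bd3 R V fE fH gE gH u hu hR hx1 hx2 h1 h2 hz).2.2.1

end Ext
end St2
namespace St2
section Det
variable (R : Z3) (V : Pot) (fE fH gE gH : Z3 → C3) (u : Fam)

lemma det (hu : MixedSol R V fE fH gE gH u) (hV : PotInv (Omega R) V)
    (hR : 1 ≤ R.1 ∧ 1 ≤ R.2.1 ∧ 1 ≤ R.2.2) (k : ℕ) :
    (k:ℤ) ≤ R.1 + 1 → ∀ y z, cor R y z →
      u.E2 ((k:ℤ),y,z) = (SS R V fE fH gE gH k).e2 (y,z) ∧
      u.E3 ((k:ℤ),y,z) = (SS R V fE fH gE gH k).e3 (y,z) ∧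
      u.H2 ((k:ℤ),y,z) = (SS R V fE fH gE gH k).h2 (y,z) ∧
      u.H3 ((k:ℤ),y,z) = (SS R V fE fH gE gH k).h3 (y,z) := by
  induction k using Nat.strong_induction_on with
  | _ k IH =>
    match k with
    | 0 =>
      intro _ y z hc
      have h := sol_bd1m R V fE fH gE gH u hu hR hc
      simp only [Nat.cast_zero, SS]
      exact ⟨h.1, h.2.1, h.2.2.1, h.2.2.2⟩
    | 1 =>
      intro _ y z hc
      have h := sol_slice1 R V fE fH gE gH u hu hR hc
      simp only [Nat.cast_one, SS]
      exact ⟨h.1, h.2.1, h.2.2.1, h.2.2.2⟩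
    | (m+2) =>
      intro hk y z hc
      have hk2 : (m:ℤ) + 2 ≤ R.1 + 1 := by push_cast at hk; omega
      have hx1 : (1:ℤ) ≤ (m:ℤ)+1 := by omega
      have hx2 : (m:ℤ)+1 ≤ R.1 := by omega
      have hq : ∀ y z, cor R y z →
          u.E2 ((m:ℤ)+1,y,z) = (SS R V fE fH gE gH (m+1)).e2 (y,z) ∧
          u.E3 ((m:ℤ)+1,y,z) = (SS R V fE fH gE gH (m+1)).e3 (y,z) ∧
          u.H2 ((m:ℤ)+1,y,z) = (SS R V fE fH gE gH (m+1)).h2 (y,z) ∧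
          u.H3 ((m:ℤ)+1,y,z) = (SS R V fE fH gE gH (m+1)).h3 (y,z) := by
        intro y z hc
        have h := IH (m+1) (by omega) (by push_cast; omega) y z hc
        push_cast at h
        exact h
      have hp : ∀ y z, cor R y z →
          u.E2 ((m:ℤ),y,z) = (SS R V fE fH gE gH m).e2 (y,z) ∧
          u.E3 ((m:ℤ),y,z) = (SS R V fE fH gE gH m).e3 (y,z) ∧
          u.H2 ((m:ℤ),y,z) = (SS R V fE fH gE gH m).h2 (y,z) ∧
          u.H3 ((m:ℤ),y,z) = (SS R V fE fH gE gH m).h3 (y,z) :=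
        IH m (by omega) (by omega)
      obtain ⟨hE1x, hH1x⟩ := slice_ext R V fE fH gE gH u hu hV hR hx1 hx2
        (SS R V fE fH gE gH (m+1)) hq
      obtain ⟨c1, c2, c3, c4⟩ := hc
      have hc' : cor R y z := ⟨c1, c2, c3, c4⟩
      have hcast : ((m+2:ℕ):ℤ) = (m:ℤ)+1+1 := by push_cast; ring
      have he2 := sol_R1 R V fE fH gE gH u hu hx1 hx2 hc'
      have he3 := sol_R2 R V fE fH gE gH u hu hx1 hx2 hc'
      have hh2 := sol_R3 R V fE fH gE gH u hu hx1 hx2 hc'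
      have hh3 := sol_R4 R V fE fH gE gH u hu hx1 hx2 hc'
      simp only [add_sub_cancel_right] at he2 he3 hh2 hh3
      refine ⟨?_, ?_, ?_, ?_⟩
      · rw [hcast, he2, (hq y z hc').2.2.2,
          hE1x (y+1) z (Or.inl ⟨by omega, by omega, c3, c4⟩),
          hE1x (y-1) z (Or.inl ⟨by omega, by omega, c3, c4⟩),
          (hp y z hc').1]
        simp only [SS, step]
      · rw [hcast, he3, (hq y z hc').2.2.1,
          hE1x y (z+1) (Or.inr ⟨c1, c2, by omega, by omega⟩),
          hE1x y (z-1) (Or.inr ⟨c1, c2, by omega, by omega⟩),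
          (hp y z hc').2.1]
        simp only [SS, step]
      · rw [hcast, hh2, (hq y z hc').2.1,
          hH1x (y+1) z (Or.inl ⟨by omega, by omega, c3, c4⟩),
          hH1x (y-1) z (Or.inl ⟨by omega, by omega, c3, c4⟩),
          (hp y z hc').2.2.1]
        simp only [SS, step]
      · rw [hcast, hh3, (hq y z hc').1,
          hH1x y (z+1) (Or.inr ⟨c1, c2, by omega, by omega⟩),
          hH1x y (z-1) (Or.inr ⟨c1, c2, by omega, by omega⟩),
          (hp y z hc').2.2.2]
        simp only [SS, step]

end Det
end St2
namespace St2
section Final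
variable (R : Z3) (V : Pot) (fE fH gE gH : Z3 → C3) (u : Fam)

lemma key_slice (hu : MixedSol R V fE fH gE gH u) (hV : PotInv (Omega R) V)
    (hR : 1 ≤ R.1 ∧ 1 ≤ R.2.1 ∧ 1 ≤ R.2.2) {x : ℤ} (h0 : 0 ≤ x) (h1 : x ≤ R.1+1) :
    ∀ y z, cor R y z →
      u.E2 (x,y,z) = (SS R V fE fH gE gH x.toNat).e2 (y,z) ∧
      u.E3 (x,y,z) = (SS R V fE fH gE gH x.toNat).e3 (y,z) ∧
      u.H2 (x,y,z) = (SS R V fE fH gE gH x.toNat).h2 (y,z) ∧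
      u.H3 (x,y,z) = (SS R V fE fH gE gH x.toNat).h3 (y,z) := by
  intro y z hc
  have hd := det R V fE fH gE gH u hu hV hR x.toNat (by omega) y z hc
  rwa [Int.toNat_of_nonneg h0] at hd

lemma eq_uc (hu : MixedSol R V fE fH gE gH u) (hV : PotInv (Omega R) V)
    (hR : 1 ≤ R.1 ∧ 1 ≤ R.2.1 ∧ 1 ≤ R.2.2) :
    EqOnH R u (uc R V fE fH gE gH) := by
  refine ⟨?_, ?_, ?_⟩
  · -- dom1 : E1, H1
    rintro ⟨x, y, z⟩ hn
    rcases hn with (h | h) | h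
    · -- Omega
      obtain ⟨hx1, hx2, hy1, hy2, hz1, hz2⟩ := h
      have hc : cor R y z := ⟨hy1, hy2, hz1, hz2⟩
      obtain ⟨hE1x, hH1x⟩ := slice_ext R V fE fH gE gH u hu hV hR hx1 hx2
        (SS R V fE fH gE gH x.toNat)
        (key_slice R V fE fH gE gH u hu hV hR (by omega) (by omega))
      constructor
      · rw [uc_E1, F1_L R V fE fH gE gH hx1]
        exact hE1x y z (Or.inl ⟨by omega, by omega, hz1, hz2⟩)
      · rw [uc_H1, G1_L R V fE fH gE gH hx1]
        exact hH1x y z (Or.inl ⟨by omega, by omega, hz1, hz2⟩)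
    · -- bd2
      rcases h with ⟨hy, hx1, hx2, hz1, hz2⟩ | ⟨hy, hx1, hx2, hz1, hz2⟩
      · have hy' : y = 0 ∨ y = R.2.1+1 := Or.inr hy
        have hs := sol_bd2 R V fE fH gE gH u hu hR hx1 hx2 hy' hz1 hz2
        have hf := F_off2 R V fE fH gE gH (x := x) (z := z) hy'
        exact ⟨hs.1.trans hf.1.symm, hs.2.2.1.trans hf.2.2.1.symm⟩
      · have hy' : y = 0 ∨ y = R.2.1+1 := Or.inl hy
        have hs := sol_bd2 R V fE fH gE gH u hu hR hx1 hx2 hy' hz1 hz2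
        have hf := F_off2 R V fE fH gE gH (x := x) (z := z) hy'
        exact ⟨hs.1.trans hf.1.symm, hs.2.2.1.trans hf.2.2.1.symm⟩
    · -- bd3
      rcases h with ⟨hz, hx1, hx2, hy1, hy2⟩ | ⟨hz, hx1, hx2, hy1, hy2⟩
      · have hz' : z = 0 ∨ z = R.2.2+1 := Or.inr hz
        have hs := sol_bd3 R V fE fH gE gH u hu hR hx1 hx2 hy1 hy2 hz'
        have hf := F_off3 R V fE fH gE gH (x := x) (y := y) hz'
        exact ⟨hs.1.trans hf.1.symm, hs.2.2.1.trans hf.2.2.1.symm⟩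
      · have hz' : z = 0 ∨ z = R.2.2+1 := Or.inl hz
        have hs := sol_bd3 R V fE fH gE gH u hu hR hx1 hx2 hy1 hy2 hz'
        have hf := F_off3 R V fE fH gE gH (x := x) (y := y) hz'
        exact ⟨hs.1.trans hf.1.symm, hs.2.2.1.trans hf.2.2.1.symm⟩
  · -- dom2 : E2, H2
    rintro ⟨x, y, z⟩ hn
    rcases hn with (h | h) | h
    · obtain ⟨hx1, hx2, hy1, hy2, hz1, hz2⟩ := h
      have hc : cor R y z := ⟨hy1, hy2, hz1, hz2⟩
      have hk := key_slice R V fE fH gE gH u hu hV hR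
        (x := x) (by omega) (by omega) y z hc
      constructor
      · rw [uc_E2, F2, if_pos ⟨hc, by omega⟩]; exact hk.1
      · rw [uc_H2, G2, if_pos ⟨hc, by omega⟩]; exact hk.2.2.1
    · have hb : (x = R.1+1 ∨ x = 0) ∧ cor R y z := by
        rcases h with ⟨h1, h2, h3, h4, h5⟩ | ⟨h1, h2, h3, h4, h5⟩
        · exact ⟨Or.inl h1, h2, h3, h4, h5⟩
        · exact ⟨Or.inr h1, h2, h3, h4, h5⟩
      obtain ⟨hx, hc⟩ := hb
      have hk := key_slice R V fE fH gE gH u hu hV hR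
        (x := x) (by omega) (by omega) y z hc
      constructor
      · rw [uc_E2, F2, if_pos ⟨hc, by omega⟩]; exact hk.1
      · rw [uc_H2, G2, if_pos ⟨hc, by omega⟩]; exact hk.2.2.1
    · rcases h with ⟨hz, hx1, hx2, hy1, hy2⟩ | ⟨hz, hx1, hx2, hy1, hy2⟩
      · have hz' : z = 0 ∨ z = R.2.2+1 := Or.inr hz
        have hs := sol_bd3 R V fE fH gE gH u hu hR hx1 hx2 hy1 hy2 hz'
        have hf := F_off3 R V fE fH gE gH (x := x) (y := y) hz'
        exact ⟨hs.2.1.trans hf.2.1.symm, hs.2.2.2.trans hf.2.2.2.symm⟩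
      · have hz' : z = 0 ∨ z = R.2.2+1 := Or.inl hz
        have hs := sol_bd3 R V fE fH gE gH u hu hR hx1 hx2 hy1 hy2 hz'
        have hf := F_off3 R V fE fH gE gH (x := x) (y := y) hz'
        exact ⟨hs.2.1.trans hf.2.1.symm, hs.2.2.2.trans hf.2.2.2.symm⟩
  · -- dom3 : E3, H3
    rintro ⟨x, y, z⟩ hn
    rcases hn with (h | h) | h
    · obtain ⟨hx1, hx2, hy1, hy2, hz1, hz2⟩ := h
      have hc : cor R y z := ⟨hy1, hy2, hz1, hz2⟩
      have hk := key_slice R V fE fH gE gH u hu hV hR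
        (x := x) (by omega) (by omega) y z hc
      constructor
      · rw [uc_E3, F3, if_pos ⟨hc, by omega⟩]; exact hk.2.1
      · rw [uc_H3, G3, if_pos ⟨hc, by omega⟩]; exact hk.2.2.2
    · have hb : (x = R.1+1 ∨ x = 0) ∧ cor R y z := by
        rcases h with ⟨h1, h2, h3, h4, h5⟩ | ⟨h1, h2, h3, h4, h5⟩
        · exact ⟨Or.inl h1, h2, h3, h4, h5⟩
        · exact ⟨Or.inr h1, h2, h3, h4, h5⟩
      obtain ⟨hx, hc⟩ := hb
      have hk := key_slice R V fE fH gE gH u hu hV hR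
        (x := x) (by omega) (by omega) y z hc
      constructor
      · rw [uc_E3, F3, if_pos ⟨hc, by omega⟩]; exact hk.2.1
      · rw [uc_H3, G3, if_pos ⟨hc, by omega⟩]; exact hk.2.2.2
    · rcases h with ⟨hy, hx1, hx2, hz1, hz2⟩ | ⟨hy, hx1, hx2, hz1, hz2⟩
      · have hy' : y = 0 ∨ y = R.2.1+1 := Or.inr hy
        have hs := sol_bd2 R V fE fH gE gH u hu hR hx1 hx2 hy' hz1 hz2
        have hf := F_off2 R V fE fH gE gH (x := x) (z := z) hy'
        exact ⟨hs.2.1.trans hf.2.1.symm, hs.2.2.2.trans hf.2.2.2.symm⟩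
      · have hy' : y = 0 ∨ y = R.2.1+1 := Or.inl hy
        have hs := sol_bd2 R V fE fH gE gH u hu hR hx1 hx2 hy' hz1 hz2
        have hf := F_off2 R V fE fH gE gH (x := x) (z := z) hy'
        exact ⟨hs.2.1.trans hf.2.1.symm, hs.2.2.2.trans hf.2.2.2.symm⟩

end Final
end St2

theorem statement2 (R : Z3) (hR : 1 ≤ R.1 ∧ 1 ≤ R.2.1 ∧ 1 ≤ R.2.2)
    (V : Pot) (hV : PotInv (Omega R) V)
    (fE fH : Z3 → C3) (hfE : AdmOn R (bd R \ bd1p R) fE) (hfH : AdmOn R (bd R \ bd1p R) fH)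
    (gE gH : Z3 → C3) (hgE : AdmOn R (bd1m R) gE) (hgH : AdmOn R (bd1m R) gH) :
    (∃ u : Fam, MixedSol R V fE fH gE gH u) ∧
    (∀ u u' : Fam, MixedSol R V fE fH gE gH u → MixedSol R V fE fH gE gH u' →
      EqOnH R u u') := by
  constructor
  · exact ⟨St2.uc R V fE fH gE gH,
      St2.mixed_uc R V fE fH gE gH hR hV hfE hfH hgE hgH⟩
  · intro u u' hu hu'
    have h1 := St2.eq_uc R V fE fH gE gH u hu hV hR
    have h2 := St2.eq_uc R V fE fH gE gH u' hu' hV hR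
    exact ⟨fun n hn => ⟨(h1.1 n hn).1.trans ((h2.1 n hn).1.symm),
        (h1.1 n hn).2.trans ((h2.1 n hn).2.symm)⟩,
      fun n hn => ⟨(h1.2.1 n hn).1.trans ((h2.2.1 n hn).1.symm),
        (h1.2.1 n hn).2.trans ((h2.2.1 n hn).2.symm)⟩,
      fun n hn => ⟨(h1.2.2 n hn).1.trans ((h2.2.2 n hn).1.symm),
        (h1.2.2 n hn).2.trans ((h2.2.2 n hn).2.symm)⟩⟩
end

section
/- Let V be an admissible potential on Ω and assume that for every f̃ ∈ (H_adm)² there is a unique u ∈ H(Ω;ℂ⁶) solving the Maxwell system with potential V in Ω with u_tan = f̃ on ∂Ω; write Λ_V f̃ = ∂_tan u. Then for every f ∈ (H_adm(∂Ω∖∂Ω₁⁺))² and every g ∈ (H_adm(∂Ω₁⁻))² there exists a unique f̃ ∈ (H_adm)² such that f̃ = f on ∂Ω∖∂Ω₁⁺ and (Λ_V f̃) = g on ∂Ω₁⁻. -/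
/-! Statement 3: given `Λ_V`, a partial Dirichlet datum on `∂Ω ∖ ∂Ω₁⁺` and a partial
Neumann datum on `∂Ω₁⁻` determine a unique full Dirichlet datum. -/

/-- `u` solves the Maxwell system with potential `V` in `Ω` with `u_tan = (fE,fH)` on `∂Ω`. -/
noncomputable def DirSolV (R : Z3) (V : Pot) (fE fH : Z3 → C3) (u : Fam) : Prop :=
  (∀ n ∈ Omega R, MaxwellAt V u n) ∧
  (∀ n ∈ bd R, tanE R u n = fE n ∧ tanH R u n = fH n)

/-- `(FE,FH)` is a full admissible Dirichlet datum extending `(fE,fH)` on `∂Ω ∖ ∂Ω₁⁺`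
whose Dirichlet-to-Neumann image `Λ_V (FE,FH) = ∂_tan u` equals `(gE,gH)` on `∂Ω₁⁻`. -/
noncomputable def Extends (R : Z3) (V : Pot) (fE fH gE gH FE FH : Z3 → C3) : Prop :=
  AdmOn R (bd R) FE ∧ AdmOn R (bd R) FH ∧
  (∀ n ∈ bd R \ bd1p R, FE n = fE n ∧ FH n = fH n) ∧
  (∀ u : Fam, DirSolV R V FE FH u →
    ∀ n ∈ bd1m R, dtanE R u n = gE n ∧ dtanH R u n = gH n)

namespace St3

@[simp] lemma tadd1 (a b c : ℤ) : ((a,b,c) : Z3) + e1 = (a+1,b,c) := by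
  simp [e1, Prod.ext_iff]
@[simp] lemma tsub1 (a b c : ℤ) : ((a,b,c) : Z3) - e1 = (a-1,b,c) := by
  simp [e1, Prod.ext_iff]
@[simp] lemma tadd2 (a b c : ℤ) : ((a,b,c) : Z3) + e2 = (a,b+1,c) := by
  simp [e2, Prod.ext_iff]
@[simp] lemma tsub2 (a b c : ℤ) : ((a,b,c) : Z3) - e2 = (a,b-1,c) := by
  simp [e2, Prod.ext_iff]
@[simp] lemma tadd3 (a b c : ℤ) : ((a,b,c) : Z3) + e3 = (a,b,c+1) := by
  simp [e3, Prod.ext_iff]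
@[simp] lemma tsub3 (a b c : ℤ) : ((a,b,c) : Z3) - e3 = (a,b,c-1) := by
  simp [e3, Prod.ext_iff]

/-- tangential projections -/
lemma tanv1m (v : C3) : v - zsmul (zdot v ((-1:ℤ),(0:ℤ),(0:ℤ))) ((-1:ℤ),(0:ℤ),(0:ℤ)) = (0, v.2.1, v.2.2) := by
  simp [zdot, zsmul, Prod.ext_iff]
lemma tanv1p (v : C3) : v - zsmul (zdot v ((1:ℤ),(0:ℤ),(0:ℤ))) ((1:ℤ),(0:ℤ),(0:ℤ)) = (0, v.2.1, v.2.2) := by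
  simp [zdot, zsmul, Prod.ext_iff]
lemma tanv2m (v : C3) : v - zsmul (zdot v ((0:ℤ),(-1:ℤ),(0:ℤ))) ((0:ℤ),(-1:ℤ),(0:ℤ)) = (v.1, 0, v.2.2) := by
  simp [zdot, zsmul, Prod.ext_iff]
lemma tanv2p (v : C3) : v - zsmul (zdot v ((0:ℤ),(1:ℤ),(0:ℤ))) ((0:ℤ),(1:ℤ),(0:ℤ)) = (v.1, 0, v.2.2) := by
  simp [zdot, zsmul, Prod.ext_iff]
lemma tanv3m (v : C3) : v - zsmul (zdot v ((0:ℤ),(0:ℤ),(-1:ℤ))) ((0:ℤ),(0:ℤ),(-1:ℤ)) = (v.1, v.2.1, 0) := by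
  simp [zdot, zsmul, Prod.ext_iff]
lemma tanv3p (v : C3) : v - zsmul (zdot v ((0:ℤ),(0:ℤ),(1:ℤ))) ((0:ℤ),(0:ℤ),(1:ℤ)) = (v.1, v.2.1, 0) := by
  simp [zdot, zsmul, Prod.ext_iff]

end St3
namespace St3
variable {R : Z3}

lemma nuv1m (y z : ℤ) : nuv R (0,y,z) = (-1,0,0) := by simp [nuv]
lemma nuv1p (hR : 1 ≤ R.1) (y z : ℤ) : nuv R (R.1+1,y,z) = (1,0,0) := by
  unfold nuv; split_ifs with h1 h2 <;> simp_all <;> omega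
lemma nuv2m {x : ℤ} (hx : 1 ≤ x) (hx' : x ≤ R.1) (z : ℤ) : nuv R (x,0,z) = (0,-1,0) := by
  unfold nuv; split_ifs with h1 h2 h3 <;> simp_all <;> omega
lemma nuv2p (hR2 : 1 ≤ R.2.1) {x : ℤ} (hx : 1 ≤ x) (hx' : x ≤ R.1) (z : ℤ) :
    nuv R (x,R.2.1+1,z) = (0,1,0) := by
  unfold nuv; split_ifs with h1 h2 h3 h4 <;> simp_all <;> omega
lemma nuv3m {x y : ℤ} (hx : 1 ≤ x) (hx' : x ≤ R.1) (hy : 1 ≤ y) (hy' : y ≤ R.2.1) :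
    nuv R (x,y,0) = (0,0,-1) := by
  unfold nuv; split_ifs with h1 h2 h3 h4 h5 <;> simp_all <;> omega
lemma nuv3p (hR3 : 1 ≤ R.2.2) {x y : ℤ} (hx : 1 ≤ x) (hx' : x ≤ R.1) (hy : 1 ≤ y) (hy' : y ≤ R.2.1) :
    nuv R (x,y,R.2.2+1) = (0,0,1) := by
  unfold nuv; split_ifs with h1 h2 h3 h4 h5 <;> simp_all <;> omega

lemma tanE_1m (u : Fam) (y z : ℤ) :
    tanE R u (0,y,z) = (0, u.E2 (0,y,z), u.E3 (0,y,z)) := by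
  unfold tanE; rw [nuv1m]; exact tanv1m _
lemma tanH_1m (u : Fam) (y z : ℤ) :
    tanH R u (0,y,z) = (0, u.H2 (0,y,z), u.H3 (0,y,z)) := by
  unfold tanH; rw [nuv1m]; exact tanv1m _
lemma tanE_1p (hR : 1 ≤ R.1) (u : Fam) (y z : ℤ) :
    tanE R u (R.1+1,y,z) = (0, u.E2 (R.1+1,y,z), u.E3 (R.1+1,y,z)) := by
  unfold tanE; rw [nuv1p hR]; exact tanv1p _
lemma tanH_1p (hR : 1 ≤ R.1) (u : Fam) (y z : ℤ) :
    tanH R u (R.1+1,y,z) = (0, u.H2 (R.1+1,y,z), u.H3 (R.1+1,y,z)) := by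
  unfold tanH; rw [nuv1p hR]; exact tanv1p _

lemma dtanE_1m (u : Fam) (y z : ℤ) :
    dtanE R u (0,y,z) =
      (0, -(u.E3 (0,y,z) - u.E3 (1,y,z)), u.E2 (0,y,z) - u.E2 (1,y,z)) := by
  unfold dtanE mOm; rw [nuv1m]
  have h : ((0,y,z) : Z3) - (-1,0,0) = (1,y,z) := by simp [Prod.ext_iff]
  rw [h]; simp [zcross, vecE, Prod.ext_iff]
lemma dtanH_1m (u : Fam) (y z : ℤ) :
    dtanH R u (0,y,z) =
      (0, -(u.H3 (0,y,z) - u.H3 (1,y,z)), u.H2 (0,y,z) - u.H2 (1,y,z)) := by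
  unfold dtanH mOm; rw [nuv1m]
  have h : ((0,y,z) : Z3) - (-1,0,0) = (1,y,z) := by simp [Prod.ext_iff]
  rw [h]; simp [zcross, vecH, Prod.ext_iff]

end St3
namespace St3

structure Sl where
  E2 : ℤ × ℤ → ℂ
  E3 : ℤ × ℤ → ℂ
  H2 : ℤ × ℤ → ℂ
  H3 : ℤ × ℤ → ℂ

/-- in the open face `1 ≤ y ≤ R₂, 1 ≤ z ≤ R₃` -/
abbrev inF (R : Z3) (y z : ℤ) : Prop := 1 ≤ y ∧ y ≤ R.2.1 ∧ 1 ≤ z ∧ z ≤ R.2.2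

noncomputable def bSl (fE fH : Z3 → C3) (x : ℤ) : Sl where
  E2 := fun p => (fE (x, p.1, p.2)).2.1
  E3 := fun p => (fE (x, p.1, p.2)).2.2
  H2 := fun p => (fH (x, p.1, p.2)).2.1
  H3 := fun p => (fH (x, p.1, p.2)).2.2

noncomputable def wrap (R : Z3) (fE fH : Z3 → C3) (x : ℤ) (s : Sl) : Sl where
  E2 := fun p => if inF R p.1 p.2 then s.E2 p else (fE (x, p.1, p.2)).2.1
  E3 := fun p => if inF R p.1 p.2 then s.E3 p else (fE (x, p.1, p.2)).2.2
  H2 := fun p => if inF R p.1 p.2 then s.H2 p else (fH (x, p.1, p.2)).2.1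
  H3 := fun p => if inF R p.1 p.2 then s.H3 p else (fH (x, p.1, p.2)).2.2

noncomputable def E1of (R : Z3) (V : Pot) (fE : Z3 → C3) (x : ℤ) (s : Sl) : ℤ × ℤ → ℂ :=
  fun p =>
    if inF R p.1 p.2 then
      (-(2 * Complex.I * V.E1 (x, p.1, p.2)))⁻¹ *
        (s.H3 (p.1+1, p.2) - s.H3 (p.1-1, p.2) - s.H2 (p.1, p.2+1) + s.H2 (p.1, p.2-1))
    else (fE (x, p.1, p.2)).1

noncomputable def H1of (R : Z3) (V : Pot) (fH : Z3 → C3) (x : ℤ) (s : Sl) : ℤ × ℤ → ℂ :=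
  fun p =>
    if inF R p.1 p.2 then
      (2 * Complex.I * V.H1 (x, p.1, p.2))⁻¹ *
        (s.E3 (p.1+1, p.2) - s.E3 (p.1-1, p.2) - s.E2 (p.1, p.2+1) + s.E2 (p.1, p.2-1))
    else (fH (x, p.1, p.2)).1

noncomputable def stepS (R : Z3) (V : Pot) (fE fH : Z3 → C3) (x : ℤ) (prev cur : Sl) : Sl where
  E2 := fun p => 2 * Complex.I * V.H3 (x, p.1, p.2) * cur.H3 p
    + E1of R V fE x cur (p.1+1, p.2) - E1of R V fE x cur (p.1-1, p.2) + prev.E2 p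
  E3 := fun p => -(2 * Complex.I * V.H2 (x, p.1, p.2) * cur.H2 p)
    + E1of R V fE x cur (p.1, p.2+1) - E1of R V fE x cur (p.1, p.2-1) + prev.E3 p
  H2 := fun p => -(2 * Complex.I * V.E3 (x, p.1, p.2) * cur.E3 p)
    + H1of R V fH x cur (p.1+1, p.2) - H1of R V fH x cur (p.1-1, p.2) + prev.H2 p
  H3 := fun p => 2 * Complex.I * V.E2 (x, p.1, p.2) * cur.E2 p
    + H1of R V fH x cur (p.1, p.2+1) - H1of R V fH x cur (p.1, p.2-1) + prev.H3 p

noncomputable def sl1 (R : Z3) (fE fH gE gH : Z3 → C3) : Sl where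
  E2 := fun p => if inF R p.1 p.2 then (fE (0, p.1, p.2)).2.1 - (gE (0, p.1, p.2)).2.2
    else (fE (1, p.1, p.2)).2.1
  E3 := fun p => if inF R p.1 p.2 then (fE (0, p.1, p.2)).2.2 + (gE (0, p.1, p.2)).2.1
    else (fE (1, p.1, p.2)).2.2
  H2 := fun p => if inF R p.1 p.2 then (fH (0, p.1, p.2)).2.1 - (gH (0, p.1, p.2)).2.2
    else (fH (1, p.1, p.2)).2.1
  H3 := fun p => if inF R p.1 p.2 then (fH (0, p.1, p.2)).2.2 + (gH (0, p.1, p.2)).2.1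
    else (fH (1, p.1, p.2)).2.2

noncomputable def SS (R : Z3) (V : Pot) (fE fH gE gH : Z3 → C3) : ℕ → Sl × Sl
  | 0 => (bSl fE fH 0, sl1 R fE fH gE gH)
  | k+1 => ((SS R V fE fH gE gH k).2,
      wrap R fE fH ((k:ℤ)+2)
        (stepS R V fE fH ((k:ℤ)+1) (SS R V fE fH gE gH k).1 (SS R V fE fH gE gH k).2))

noncomputable def sli (R : Z3) (V : Pot) (fE fH gE gH : Z3 → C3) (t : ℕ) : Sl :=
  (SS R V fE fH gE gH t).1

lemma sli0 (R V fE fH gE gH) : sli R V fE fH gE gH 0 = bSl fE fH 0 := rfl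
lemma sli1 (R V fE fH gE gH) : sli R V fE fH gE gH 1 = sl1 R fE fH gE gH := rfl
lemma sli2 (R V fE fH gE gH) (k : ℕ) :
    sli R V fE fH gE gH (k+2) = wrap R fE fH ((k:ℤ)+2)
      (stepS R V fE fH ((k:ℤ)+1) (sli R V fE fH gE gH k) (sli R V fE fH gE gH (k+1))) := rfl

/-- off-face values of every slice are the boundary data -/
lemma sli_off (R V fE fH gE gH) (t : ℕ) {y z : ℤ} (h : ¬ inF R y z) :
    (sli R V fE fH gE gH t).E2 (y,z) = (fE ((t:ℤ), y, z)).2.1 ∧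
    (sli R V fE fH gE gH t).E3 (y,z) = (fE ((t:ℤ), y, z)).2.2 ∧
    (sli R V fE fH gE gH t).H2 (y,z) = (fH ((t:ℤ), y, z)).2.1 ∧
    (sli R V fE fH gE gH t).H3 (y,z) = (fH ((t:ℤ), y, z)).2.2 := by
  match t with
  | 0 => simp [sli0, bSl]
  | 1 => rw [sli1]; unfold sl1; simp only [if_neg h]; norm_num
  | (k+2) => rw [sli2]; unfold wrap; simp only [if_neg h]; push_cast; refine ⟨rfl, rfl, rfl, rfl⟩

end St3
namespace St3

lemma twoI_ne : (2:ℂ) * Complex.I ≠ 0 := by simp [Complex.I_ne_zero]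

lemma maxwell_eqs {V : Pot} {u : Fam} {n : Z3} (hE1 : V.E1 n ≠ 0) (hH1 : V.H1 n ≠ 0)
    (h : MaxwellAt V u n) :
    eqR1 V u n ∧ eqR2 V u n ∧ eqR3 V u n ∧ eqR4 V u n ∧ eqA1 V u n ∧ eqA2 V u n := by
  obtain ⟨h1, h2⟩ := h
  simp only [Mcurl, Prod.mk.injEq] at h1 h2
  obtain ⟨a1, a2, a3⟩ := h1
  obtain ⟨b1, b2, b3⟩ := h2
  rw [inv_mul_eq_iff_eq_mul₀ twoI_ne] at a1 a2 a3 b1 b2 b3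
  refine ⟨?_, ?_, ?_, ?_, ?_, ?_⟩
  · unfold eqR1; linear_combination a3
  · unfold eqR2; linear_combination -a2
  · unfold eqR3; linear_combination b3
  · unfold eqR4; linear_combination -b2
  · unfold eqA1
    rw [eq_inv_mul_iff_mul_eq₀ (neg_ne_zero.mpr (mul_ne_zero twoI_ne hE1))]
    linear_combination -b1
  · unfold eqA2
    rw [eq_inv_mul_iff_mul_eq₀ (mul_ne_zero twoI_ne hH1)]
    linear_combination -a1

lemma maxwell_of_eqs {V : Pot} {u : Fam} {n : Z3} (hE1 : V.E1 n ≠ 0) (hH1 : V.H1 n ≠ 0)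
    (e1' : eqR1 V u n) (e2' : eqR2 V u n) (e3' : eqR3 V u n) (e4' : eqR4 V u n)
    (eA1 : eqA1 V u n) (eA2 : eqA2 V u n) : MaxwellAt V u n := by
  unfold eqR1 at e1'; unfold eqR2 at e2'; unfold eqR3 at e3'; unfold eqR4 at e4'
  unfold eqA1 at eA1; unfold eqA2 at eA2
  rw [eq_inv_mul_iff_mul_eq₀ (neg_ne_zero.mpr (mul_ne_zero twoI_ne hE1))] at eA1
  rw [eq_inv_mul_iff_mul_eq₀ (mul_ne_zero twoI_ne hH1)] at eA2
  constructor <;> simp only [Mcurl, Prod.mk.injEq] <;>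
    refine ⟨?_, ?_, ?_⟩ <;> rw [inv_mul_eq_iff_eq_mul₀ twoI_ne]
  · linear_combination -eA2
  · linear_combination -e2'
  · linear_combination e1'
  · linear_combination -eA1
  · linear_combination -e4'
  · linear_combination e3'

end St3
namespace St3
variable {R : Z3}

lemma memOmega {x y z : ℤ} (h1 : 1 ≤ x) (h2 : x ≤ R.1) (h3 : 1 ≤ y) (h4 : y ≤ R.2.1)
    (h5 : 1 ≤ z) (h6 : z ≤ R.2.2) : ((x,y,z) : Z3) ∈ Omega R := by
  simp only [Omega, Set.mem_setOf_eq]; exact ⟨h1, h2, h3, h4, h5, h6⟩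

lemma mem1m (hR1 : 1 ≤ R.1) {y z : ℤ} (h3 : 1 ≤ y) (h4 : y ≤ R.2.1) (h5 : 1 ≤ z)
    (h6 : z ≤ R.2.2) : ((0,y,z) : Z3) ∈ bd R \ bd1p R := by
  constructor
  · left; left; right
    simp only [bd1m, Set.mem_setOf_eq]; exact ⟨trivial, h3, h4, h5, h6⟩
  · simp only [bd1p, Set.mem_setOf_eq]; push_neg; intro h; omega

lemma mem1m' {y z : ℤ} (h3 : 1 ≤ y) (h4 : y ≤ R.2.1) (h5 : 1 ≤ z)
    (h6 : z ≤ R.2.2) : ((0,y,z) : Z3) ∈ bd1m R := by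
  simp only [bd1m, Set.mem_setOf_eq]; exact ⟨trivial, h3, h4, h5, h6⟩

lemma mem1p (hR1 : 1 ≤ R.1) {y z : ℤ} (h3 : 1 ≤ y) (h4 : y ≤ R.2.1) (h5 : 1 ≤ z)
    (h6 : z ≤ R.2.2) : ((R.1+1,y,z) : Z3) ∈ bd R := by
  left; left; left
  simp only [bd1p, Set.mem_setOf_eq]; exact ⟨trivial, h3, h4, h5, h6⟩

lemma mem2f {x y z : ℤ} (h1 : 1 ≤ x) (h2 : x ≤ R.1) (hy : y = 0 ∨ y = R.2.1 + 1)
    (h5 : 1 ≤ z) (h6 : z ≤ R.2.2) : ((x,y,z) : Z3) ∈ bd R \ bd1p R := by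
  constructor
  · left; right
    rcases hy with hy | hy
    · right; simp only [bd2m, Set.mem_setOf_eq]; exact ⟨hy, h1, h2, h5, h6⟩
    · left; simp only [bd2p, Set.mem_setOf_eq]; exact ⟨hy, h1, h2, h5, h6⟩
  · simp only [bd1p, Set.mem_setOf_eq]; push_neg; intro _ h; omega

lemma mem3f {x y z : ℤ} (h1 : 1 ≤ x) (h2 : x ≤ R.1) (h3 : 1 ≤ y) (h4 : y ≤ R.2.1)
    (hz : z = 0 ∨ z = R.2.2 + 1) : ((x,y,z) : Z3) ∈ bd R \ bd1p R := by
  constructor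
  · right
    rcases hz with hz | hz
    · right; simp only [bd3m, Set.mem_setOf_eq]; exact ⟨hz, h1, h2, h3, h4⟩
    · left; simp only [bd3p, Set.mem_setOf_eq]; exact ⟨hz, h1, h2, h3, h4⟩
  · simp only [bd1p, Set.mem_setOf_eq]; push_neg; intro _ _ _ h; omega

/-- tangential traces on the four side faces -/
lemma tanE_2 {x y z : ℤ} (h1 : 1 ≤ x) (h2 : x ≤ R.1) (hR2 : 1 ≤ R.2.1)
    (hy : y = 0 ∨ y = R.2.1 + 1) (u : Fam) :
    tanE R u (x,y,z) = (u.E1 (x,y,z), 0, u.E3 (x,y,z)) := by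
  rcases hy with hy | hy <;> subst hy <;> unfold tanE
  · rw [nuv2m h1 h2]; exact tanv2m _
  · rw [nuv2p hR2 h1 h2]; exact tanv2p _

lemma tanH_2 {x y z : ℤ} (h1 : 1 ≤ x) (h2 : x ≤ R.1) (hR2 : 1 ≤ R.2.1)
    (hy : y = 0 ∨ y = R.2.1 + 1) (u : Fam) :
    tanH R u (x,y,z) = (u.H1 (x,y,z), 0, u.H3 (x,y,z)) := by
  rcases hy with hy | hy <;> subst hy <;> unfold tanH
  · rw [nuv2m h1 h2]; exact tanv2m _
  · rw [nuv2p hR2 h1 h2]; exact tanv2p _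

lemma tanE_3 {x y z : ℤ} (h1 : 1 ≤ x) (h2 : x ≤ R.1) (h3 : 1 ≤ y) (h4 : y ≤ R.2.1)
    (hR3 : 1 ≤ R.2.2) (hz : z = 0 ∨ z = R.2.2 + 1) (u : Fam) :
    tanE R u (x,y,z) = (u.E1 (x,y,z), u.E2 (x,y,z), 0) := by
  rcases hz with hz | hz <;> subst hz <;> unfold tanE
  · rw [nuv3m h1 h2 h3 h4]; exact tanv3m _
  · rw [nuv3p hR3 h1 h2 h3 h4]; exact tanv3p _

lemma tanH_3 {x y z : ℤ} (h1 : 1 ≤ x) (h2 : x ≤ R.1) (h3 : 1 ≤ y) (h4 : y ≤ R.2.1)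
    (hR3 : 1 ≤ R.2.2) (hz : z = 0 ∨ z = R.2.2 + 1) (u : Fam) :
    tanH R u (x,y,z) = (u.H1 (x,y,z), u.H2 (x,y,z), 0) := by
  rcases hz with hz | hz <;> subst hz <;> unfold tanH
  · rw [nuv3m h1 h2 h3 h4]; exact tanv3m _
  · rw [nuv3p hR3 h1 h2 h3 h4]; exact tanv3p _

end St3
namespace St3

lemma c3ext {a b c : ℂ} {v : C3} (h : (a, b, c) = v) : a = v.1 ∧ b = v.2.1 ∧ c = v.2.2 := by
  subst h; exact ⟨rfl, rfl, rfl⟩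

section Core

variable (R : Z3) (V : Pot) (fE fH gE gH : Z3 → C3) (u : Fam)

/-- agreement of the transversal components with the recursion slices -/
def Agr (t : ℕ) : Prop := ∀ y z : ℤ, inF R y z →
  u.E2 ((t:ℤ),y,z) = (sli R V fE fH gE gH t).E2 (y,z) ∧
  u.E3 ((t:ℤ),y,z) = (sli R V fE fH gE gH t).E3 (y,z) ∧
  u.H2 ((t:ℤ),y,z) = (sli R V fE fH gE gH t).H2 (y,z) ∧
  u.H3 ((t:ℤ),y,z) = (sli R V fE fH gE gH t).H3 (y,z)

variable {R V fE fH gE gH u}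
variable (hR : 1 ≤ R.1 ∧ 1 ≤ R.2.1 ∧ 1 ≤ R.2.2)
variable (htE : ∀ n ∈ bd R \ bd1p R, tanE R u n = fE n)
variable (htH : ∀ n ∈ bd R \ bd1p R, tanH R u n = fH n)

include hR htE htH in
lemma side3 {t : ℕ} (ht1 : 1 ≤ (t:ℤ)) (ht2 : (t:ℤ) ≤ R.1)
    (hA : Agr R V fE fH gE gH u t) {y z : ℤ}
    (hy : 0 ≤ y) (hy' : y ≤ R.2.1+1) (hz : 1 ≤ z) (hz' : z ≤ R.2.2) :
    u.E3 ((t:ℤ),y,z) = (sli R V fE fH gE gH t).E3 (y,z) ∧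
    u.H3 ((t:ℤ),y,z) = (sli R V fE fH gE gH t).H3 (y,z) := by
  by_cases hF : inF R y z
  · exact ⟨(hA y z hF).2.1, (hA y z hF).2.2.2⟩
  · have hF' : ¬ (1 ≤ y ∧ y ≤ R.2.1 ∧ 1 ≤ z ∧ z ≤ R.2.2) := hF
    have hy0 : y = 0 ∨ y = R.2.1 + 1 := by omega
    have hmem := mem2f ht1 ht2 hy0 hz hz'
    have hE := htE _ hmem
    have hH := htH _ hmem
    rw [tanE_2 ht1 ht2 hR.2.1 hy0] at hE
    rw [tanH_2 ht1 ht2 hR.2.1 hy0] at hH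
    obtain ⟨hs1, hs2, hs3, hs4⟩ := sli_off R V fE fH gE gH t hF
    exact ⟨by rw [hs2]; exact (c3ext hE).2.2, by rw [hs4]; exact (c3ext hH).2.2⟩

include hR htE htH in
lemma side2 {t : ℕ} (ht1 : 1 ≤ (t:ℤ)) (ht2 : (t:ℤ) ≤ R.1)
    (hA : Agr R V fE fH gE gH u t) {y z : ℤ}
    (hy : 1 ≤ y) (hy' : y ≤ R.2.1) (hz : 0 ≤ z) (hz' : z ≤ R.2.2+1) :
    u.E2 ((t:ℤ),y,z) = (sli R V fE fH gE gH t).E2 (y,z) ∧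
    u.H2 ((t:ℤ),y,z) = (sli R V fE fH gE gH t).H2 (y,z) := by
  by_cases hF : inF R y z
  · exact ⟨(hA y z hF).1, (hA y z hF).2.2.1⟩
  · have hF' : ¬ (1 ≤ y ∧ y ≤ R.2.1 ∧ 1 ≤ z ∧ z ≤ R.2.2) := hF
    have hz0 : z = 0 ∨ z = R.2.2 + 1 := by omega
    have hmem := mem3f ht1 ht2 hy hy' hz0
    have hE := htE _ hmem
    have hH := htH _ hmem
    rw [tanE_3 ht1 ht2 hy hy' hR.2.2 hz0] at hE
    rw [tanH_3 ht1 ht2 hy hy' hR.2.2 hz0] at hH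
    obtain ⟨hs1, hs2, hs3, hs4⟩ := sli_off R V fE fH gE gH t hF
    exact ⟨by rw [hs1]; exact (c3ext hE).2.1, by rw [hs3]; exact (c3ext hH).2.1⟩

variable (hV : PotInv (Omega R) V)
variable (hM : ∀ n ∈ Omega R, MaxwellAt V u n)

include hR htE htH hV hM in
lemma extE1 {t : ℕ} (ht1 : 1 ≤ (t:ℤ)) (ht2 : (t:ℤ) ≤ R.1)
    (hA : Agr R V fE fH gE gH u t) {y z : ℤ}
    (hyz : (0 ≤ y ∧ y ≤ R.2.1+1 ∧ 1 ≤ z ∧ z ≤ R.2.2) ∨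
      (1 ≤ y ∧ y ≤ R.2.1 ∧ 0 ≤ z ∧ z ≤ R.2.2+1)) :
    u.E1 ((t:ℤ),y,z) = E1of R V fE (t:ℤ) (sli R V fE fH gE gH t) (y,z) := by
  by_cases hF : inF R y z
  · obtain ⟨hy1, hy2, hz1, hz2⟩ := hF
    have hmem : ((t:ℤ),y,z) ∈ Omega R := memOmega ht1 ht2 hy1 hy2 hz1 hz2
    have hVn := hV _ hmem
    have hA1 := (maxwell_eqs hVn.1 hVn.2.2.2.1 (hM _ hmem)).2.2.2.2.1
    unfold eqA1 at hA1
    simp only [tadd1, tsub1, tadd2, tsub2, tadd3, tsub3] at hA1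
    rw [(side3 hR htE htH ht1 ht2 hA (by omega) (by omega) hz1 hz2).2,
        (side3 hR htE htH ht1 ht2 hA (by omega) (by omega) hz1 hz2).2,
        (side2 hR htE htH ht1 ht2 hA hy1 hy2 (by omega) (by omega)).2,
        (side2 hR htE htH ht1 ht2 hA hy1 hy2 (by omega) (by omega)).2] at hA1
    simp only [E1of]
    rw [if_pos (show inF R y z from ⟨hy1, hy2, hz1, hz2⟩)]
    exact hA1
  · have hF' : ¬ (1 ≤ y ∧ y ≤ R.2.1 ∧ 1 ≤ z ∧ z ≤ R.2.2) := hF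
    simp only [E1of]
    rw [if_neg hF]
    rcases hyz with ⟨h1,h2,h3,h4⟩ | ⟨h1,h2,h3,h4⟩
    · have hy0 : y = 0 ∨ y = R.2.1 + 1 := by omega
      have hE := htE _ (mem2f ht1 ht2 hy0 h3 h4)
      rw [tanE_2 ht1 ht2 hR.2.1 hy0] at hE
      exact (c3ext hE).1
    · have hz0 : z = 0 ∨ z = R.2.2 + 1 := by omega
      have hE := htE _ (mem3f ht1 ht2 h1 h2 hz0)
      rw [tanE_3 ht1 ht2 h1 h2 hR.2.2 hz0] at hE
      exact (c3ext hE).1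

include hR htE htH hV hM in
lemma extH1 {t : ℕ} (ht1 : 1 ≤ (t:ℤ)) (ht2 : (t:ℤ) ≤ R.1)
    (hA : Agr R V fE fH gE gH u t) {y z : ℤ}
    (hyz : (0 ≤ y ∧ y ≤ R.2.1+1 ∧ 1 ≤ z ∧ z ≤ R.2.2) ∨
      (1 ≤ y ∧ y ≤ R.2.1 ∧ 0 ≤ z ∧ z ≤ R.2.2+1)) :
    u.H1 ((t:ℤ),y,z) = H1of R V fH (t:ℤ) (sli R V fE fH gE gH t) (y,z) := by
  by_cases hF : inF R y z
  · obtain ⟨hy1, hy2, hz1, hz2⟩ := hF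
    have hmem : ((t:ℤ),y,z) ∈ Omega R := memOmega ht1 ht2 hy1 hy2 hz1 hz2
    have hVn := hV _ hmem
    have hA2 := (maxwell_eqs hVn.1 hVn.2.2.2.1 (hM _ hmem)).2.2.2.2.2
    unfold eqA2 at hA2
    simp only [tadd1, tsub1, tadd2, tsub2, tadd3, tsub3] at hA2
    rw [(side3 hR htE htH ht1 ht2 hA (by omega) (by omega) hz1 hz2).1,
        (side3 hR htE htH ht1 ht2 hA (by omega) (by omega) hz1 hz2).1,
        (side2 hR htE htH ht1 ht2 hA hy1 hy2 (by omega) (by omega)).1,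
        (side2 hR htE htH ht1 ht2 hA hy1 hy2 (by omega) (by omega)).1] at hA2
    simp only [H1of]
    rw [if_pos (show inF R y z from ⟨hy1, hy2, hz1, hz2⟩)]
    exact hA2
  · have hF' : ¬ (1 ≤ y ∧ y ≤ R.2.1 ∧ 1 ≤ z ∧ z ≤ R.2.2) := hF
    simp only [H1of]
    rw [if_neg hF]
    rcases hyz with ⟨h1,h2,h3,h4⟩ | ⟨h1,h2,h3,h4⟩
    · have hy0 : y = 0 ∨ y = R.2.1 + 1 := by omega
      have hH := htH _ (mem2f ht1 ht2 hy0 h3 h4)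
      rw [tanH_2 ht1 ht2 hR.2.1 hy0] at hH
      exact (c3ext hH).1
    · have hz0 : z = 0 ∨ z = R.2.2 + 1 := by omega
      have hH := htH _ (mem3f ht1 ht2 h1 h2 hz0)
      rw [tanH_3 ht1 ht2 h1 h2 hR.2.2 hz0] at hH
      exact (c3ext hH).1

end Core
end St3
namespace St3
section Core2

variable {R : Z3} {V : Pot} {fE fH gE gH : Z3 → C3} {u : Fam}
variable (hR : 1 ≤ R.1 ∧ 1 ≤ R.2.1 ∧ 1 ≤ R.2.2)
variable (hV : PotInv (Omega R) V)
variable (hM : ∀ n ∈ Omega R, MaxwellAt V u n)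
variable (htE : ∀ n ∈ bd R \ bd1p R, tanE R u n = fE n)
variable (htH : ∀ n ∈ bd R \ bd1p R, tanH R u n = fH n)
variable (hnE : ∀ n ∈ bd1m R, dtanE R u n = gE n)
variable (hnH : ∀ n ∈ bd1m R, dtanH R u n = gH n)

include hR htE htH in
lemma agr0 : Agr R V fE fH gE gH u 0 := by
  intro y z hF
  obtain ⟨hy1, hy2, hz1, hz2⟩ := hF
  have hE := htE _ (mem1m hR.1 hy1 hy2 hz1 hz2)
  have hH := htH _ (mem1m hR.1 hy1 hy2 hz1 hz2)
  rw [tanE_1m] at hE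
  rw [tanH_1m] at hH
  push_cast
  exact ⟨(c3ext hE).2.1, (c3ext hE).2.2, (c3ext hH).2.1, (c3ext hH).2.2⟩

include hR htE htH hnE hnH in
lemma agr1 : Agr R V fE fH gE gH u 1 := by
  intro y z hF
  have hF' := hF
  obtain ⟨hy1, hy2, hz1, hz2⟩ := hF'
  have h0 := agr0 (V:=V) (gE:=gE) (gH:=gH) hR htE htH y z hF
  push_cast at h0
  have hE := hnE _ (mem1m' hy1 hy2 hz1 hz2)
  have hH := hnH _ (mem1m' hy1 hy2 hz1 hz2)
  rw [dtanE_1m] at hE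
  rw [dtanH_1m] at hH
  obtain ⟨-, hE3, hE2⟩ := c3ext hE
  obtain ⟨-, hH3, hH2⟩ := c3ext hH
  push_cast
  rw [sli1]
  simp only [sl1]
  rw [if_pos hF, if_pos hF, if_pos hF, if_pos hF]
  have hs := sli0 R V fE fH gE gH
  refine ⟨?_, ?_, ?_, ?_⟩
  · have := h0.1; rw [hs] at this; simp only [bSl] at this; linear_combination this - hE2
  · have := h0.2.1; rw [hs] at this; simp only [bSl] at this; linear_combination this + hE3
  · have := h0.2.2.1; rw [hs] at this; simp only [bSl] at this; linear_combination this - hH2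
  · have := h0.2.2.2; rw [hs] at this; simp only [bSl] at this; linear_combination this + hH3

include hR hV hM htE htH in
lemma agrStep {t : ℕ} (ht2 : (t:ℤ)+2 ≤ R.1+1)
    (hA : Agr R V fE fH gE gH u t) (hA1 : Agr R V fE fH gE gH u (t+1)) :
    Agr R V fE fH gE gH u (t+2) := by
  intro y z hF
  have hF' := hF
  obtain ⟨hy1, hy2, hz1, hz2⟩ := hF'
  have harr : ((t:ℤ)+1)+1 = (t:ℤ)+2 := by ring
  have harr2 : ((t:ℤ)+1)-1 = (t:ℤ) := by ring
  have ht1' : 1 ≤ ((t+1:ℕ):ℤ) := by push_cast; omega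
  have ht2' : ((t+1:ℕ):ℤ) ≤ R.1 := by push_cast; omega
  have hmem : (((t:ℤ)+1),y,z) ∈ Omega R := memOmega (by omega) (by omega) hy1 hy2 hz1 hz2
  have hVn := hV _ hmem
  have heq := maxwell_eqs hVn.1 hVn.2.2.2.1 (hM _ hmem)
  have hA1' := hA1 y z hF
  push_cast at hA1'
  have hA' := hA y z hF
  -- E1 and H1 of u on slice t+1 at the four needed neighbours
  have hE1p2 := extE1 hR htE htH hV hM ht1' ht2' hA1 (y := y+1) (z := z)
    (Or.inl ⟨by omega, by omega, hz1, hz2⟩)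
  have hE1m2 := extE1 hR htE htH hV hM ht1' ht2' hA1 (y := y-1) (z := z)
    (Or.inl ⟨by omega, by omega, hz1, hz2⟩)
  have hE1p3 := extE1 hR htE htH hV hM ht1' ht2' hA1 (y := y) (z := z+1)
    (Or.inr ⟨hy1, hy2, by omega, by omega⟩)
  have hE1m3 := extE1 hR htE htH hV hM ht1' ht2' hA1 (y := y) (z := z-1)
    (Or.inr ⟨hy1, hy2, by omega, by omega⟩)
  have hH1p2 := extH1 hR htE htH hV hM ht1' ht2' hA1 (y := y+1) (z := z)
    (Or.inl ⟨by omega, by omega, hz1, hz2⟩)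
  have hH1m2 := extH1 hR htE htH hV hM ht1' ht2' hA1 (y := y-1) (z := z)
    (Or.inl ⟨by omega, by omega, hz1, hz2⟩)
  have hH1p3 := extH1 hR htE htH hV hM ht1' ht2' hA1 (y := y) (z := z+1)
    (Or.inr ⟨hy1, hy2, by omega, by omega⟩)
  have hH1m3 := extH1 hR htE htH hV hM ht1' ht2' hA1 (y := y) (z := z-1)
    (Or.inr ⟨hy1, hy2, by omega, by omega⟩)
  push_cast at hE1p2 hE1m2 hE1p3 hE1m3 hH1p2 hH1m2 hH1p3 hH1m3
  push_cast
  rw [sli2]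
  simp only [wrap]
  rw [if_pos hF, if_pos hF, if_pos hF, if_pos hF]
  simp only [stepS]
  refine ⟨?_, ?_, ?_, ?_⟩
  · have e := heq.1; unfold eqR1 at e
    simp only [tadd1, tsub1, tadd2, tsub2, tadd3, tsub3] at e
    rw [harr, harr2, hA1'.2.2.2, hE1p2, hE1m2, hA'.1] at e
    exact e
  · have e := heq.2.1; unfold eqR2 at e
    simp only [tadd1, tsub1, tadd2, tsub2, tadd3, tsub3] at e
    rw [harr, harr2, hA1'.2.2.1, hE1p3, hE1m3, hA'.2.1] at e
    exact e
  · have e := heq.2.2.1; unfold eqR3 at e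
    simp only [tadd1, tsub1, tadd2, tsub2, tadd3, tsub3] at e
    rw [harr, harr2, hA1'.2.1, hH1p2, hH1m2, hA'.2.2.1] at e
    exact e
  · have e := heq.2.2.2.1; unfold eqR4 at e
    simp only [tadd1, tsub1, tadd2, tsub2, tadd3, tsub3] at e
    rw [harr, harr2, hA1'.1, hH1p3, hH1m3, hA'.2.2.2] at e
    exact e

include hR hV hM htE htH hnE hnH in
lemma agrAll : ∀ t : ℕ, (t:ℤ) ≤ R.1 + 1 → Agr R V fE fH gE gH u t := by
  have key : ∀ t : ℕ, (t:ℤ)+1 ≤ R.1+1 →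
      Agr R V fE fH gE gH u t ∧ Agr R V fE fH gE gH u (t+1) := by
    intro t
    induction t with
    | zero => exact fun _ => ⟨agr0 hR htE htH, agr1 hR htE htH hnE hnH⟩
    | succ s ih =>
      intro h
      push_cast at h
      have hs := ih (by omega)
      exact ⟨hs.2, agrStep hR hV hM htE htH (by push_cast; omega) hs.1 hs.2⟩
  intro t ht
  match t with
  | 0 => exact (key 0 (by push_cast; omega)).1
  | Nat.succ s =>
    have := (key s (by push_cast at ht ⊢; omega)).2
    exact this

end Core2
end St3
namespace St3

noncomputable def uCon (R : Z3) (V : Pot) (fE fH gE gH : Z3 → C3) : Fam where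
  E1 := fun n => if 0 ≤ n.1 then E1of R V fE n.1 (sli R V fE fH gE gH n.1.toNat) (n.2.1, n.2.2) else 0
  E2 := fun n => if 0 ≤ n.1 then (sli R V fE fH gE gH n.1.toNat).E2 (n.2.1, n.2.2) else 0
  E3 := fun n => if 0 ≤ n.1 then (sli R V fE fH gE gH n.1.toNat).E3 (n.2.1, n.2.2) else 0
  H1 := fun n => if 0 ≤ n.1 then H1of R V fH n.1 (sli R V fE fH gE gH n.1.toNat) (n.2.1, n.2.2) else 0
  H2 := fun n => if 0 ≤ n.1 then (sli R V fE fH gE gH n.1.toNat).H2 (n.2.1, n.2.2) else 0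
  H3 := fun n => if 0 ≤ n.1 then (sli R V fE fH gE gH n.1.toNat).H3 (n.2.1, n.2.2) else 0

section UCon
variable (R : Z3) (V : Pot) (fE fH gE gH : Z3 → C3)

lemma vE1 {x : ℤ} {t : ℕ} (h : x = (t:ℤ)) (y z : ℤ) :
    (uCon R V fE fH gE gH).E1 (x,y,z) = E1of R V fE (t:ℤ) (sli R V fE fH gE gH t) (y,z) := by
  subst h; simp [uCon]
lemma vH1 {x : ℤ} {t : ℕ} (h : x = (t:ℤ)) (y z : ℤ) :
    (uCon R V fE fH gE gH).H1 (x,y,z) = H1of R V fH (t:ℤ) (sli R V fE fH gE gH t) (y,z) := by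
  subst h; simp [uCon]
lemma vE2 {x : ℤ} {t : ℕ} (h : x = (t:ℤ)) (y z : ℤ) :
    (uCon R V fE fH gE gH).E2 (x,y,z) = (sli R V fE fH gE gH t).E2 (y,z) := by
  subst h; simp [uCon]
lemma vE3 {x : ℤ} {t : ℕ} (h : x = (t:ℤ)) (y z : ℤ) :
    (uCon R V fE fH gE gH).E3 (x,y,z) = (sli R V fE fH gE gH t).E3 (y,z) := by
  subst h; simp [uCon]
lemma vH2 {x : ℤ} {t : ℕ} (h : x = (t:ℤ)) (y z : ℤ) :
    (uCon R V fE fH gE gH).H2 (x,y,z) = (sli R V fE fH gE gH t).H2 (y,z) := by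
  subst h; simp [uCon]
lemma vH3 {x : ℤ} {t : ℕ} (h : x = (t:ℤ)) (y z : ℤ) :
    (uCon R V fE fH gE gH).H3 (x,y,z) = (sli R V fE fH gE gH t).H3 (y,z) := by
  subst h; simp [uCon]

variable {R V}

lemma uConMax (hV : PotInv (Omega R) V) :
    ∀ n ∈ Omega R, MaxwellAt V (uCon R V fE fH gE gH) n := by
  rintro ⟨x, y, z⟩ hn
  simp only [Omega, Set.mem_setOf_eq] at hn
  obtain ⟨h1, h2, h3, h4, h5, h6⟩ := hn
  obtain ⟨k, hk⟩ : ∃ k : ℕ, x = (k:ℤ)+1 := ⟨(x-1).toNat, by omega⟩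
  subst hk
  have hF : inF R y z := ⟨h3, h4, h5, h6⟩
  have hVn := hV _ (memOmega h1 h2 h3 h4 h5 h6)
  have c2 : (k:ℤ)+1+1 = ((k+2:ℕ):ℤ) := by push_cast; ring
  have c1 : (k:ℤ)+1 = ((k+1:ℕ):ℤ) := by push_cast; ring
  have c0 : (k:ℤ)+1-1 = ((k:ℕ):ℤ) := by push_cast; ring
  apply maxwell_of_eqs hVn.1 hVn.2.2.2.1
  · unfold eqR1
    simp only [tadd1, tsub1, tadd2, tsub2, tadd3, tsub3]
    rw [vE2 R V fE fH gE gH c2, vH3 R V fE fH gE gH c1, vE1 R V fE fH gE gH c1,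
      vE1 R V fE fH gE gH c1, vE2 R V fE fH gE gH c0, sli2]
    simp only [wrap]
    rw [if_pos hF]
    simp only [stepS]
    push_cast
    ring
  · unfold eqR2
    simp only [tadd1, tsub1, tadd2, tsub2, tadd3, tsub3]
    rw [vE3 R V fE fH gE gH c2, vH2 R V fE fH gE gH c1, vE1 R V fE fH gE gH c1,
      vE1 R V fE fH gE gH c1, vE3 R V fE fH gE gH c0, sli2]
    simp only [wrap]
    rw [if_pos hF]
    simp only [stepS]
    push_cast
    ring
  · unfold eqR3
    simp only [tadd1, tsub1, tadd2, tsub2, tadd3, tsub3]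
    rw [vH2 R V fE fH gE gH c2, vE3 R V fE fH gE gH c1, vH1 R V fE fH gE gH c1,
      vH1 R V fE fH gE gH c1, vH2 R V fE fH gE gH c0, sli2]
    simp only [wrap]
    rw [if_pos hF]
    simp only [stepS]
    push_cast
    ring
  · unfold eqR4
    simp only [tadd1, tsub1, tadd2, tsub2, tadd3, tsub3]
    rw [vH3 R V fE fH gE gH c2, vE2 R V fE fH gE gH c1, vH1 R V fE fH gE gH c1,
      vH1 R V fE fH gE gH c1, vH3 R V fE fH gE gH c0, sli2]
    simp only [wrap]
    rw [if_pos hF]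
    simp only [stepS]
    push_cast
    ring
  · unfold eqA1
    simp only [tadd1, tsub1, tadd2, tsub2, tadd3, tsub3]
    rw [vE1 R V fE fH gE gH c1, vH3 R V fE fH gE gH c1, vH3 R V fE fH gE gH c1,
      vH2 R V fE fH gE gH c1, vH2 R V fE fH gE gH c1]
    simp only [E1of]
    rw [if_pos hF]
    push_cast
    ring
  · unfold eqA2
    simp only [tadd1, tsub1, tadd2, tsub2, tadd3, tsub3]
    rw [vH1 R V fE fH gE gH c1, vE3 R V fE fH gE gH c1, vE3 R V fE fH gE gH c1,
      vE2 R V fE fH gE gH c1, vE2 R V fE fH gE gH c1]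
    simp only [H1of]
    rw [if_pos hF]
    push_cast
    ring

end UCon
end St3
namespace St3

lemma c3mk1 {v : C3} (h : v.1 = 0) : ((0 : ℂ), v.2.1, v.2.2) = v := by rw [← h]
lemma c3mk2 {v : C3} (h : v.2.1 = 0) : (v.1, (0 : ℂ), v.2.2) = v := by rw [← h]
lemma c3mk3 {v : C3} (h : v.2.2 = 0) : (v.1, v.2.1, (0 : ℂ)) = v := by rw [← h]

section UCon2
variable (R : Z3) (V : Pot) (fE fH gE gH : Z3 → C3)

lemma vE1off {x : ℤ} (hx : 0 ≤ x) {y z : ℤ} (h : ¬ inF R y z) :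
    (uCon R V fE fH gE gH).E1 (x,y,z) = (fE (x,y,z)).1 := by
  rw [vE1 R V fE fH gE gH (show x = ((x.toNat:ℕ):ℤ) by omega)]
  simp only [E1of]; rw [if_neg h, show ((x.toNat:ℕ):ℤ) = x by omega]
lemma vH1off {x : ℤ} (hx : 0 ≤ x) {y z : ℤ} (h : ¬ inF R y z) :
    (uCon R V fE fH gE gH).H1 (x,y,z) = (fH (x,y,z)).1 := by
  rw [vH1 R V fE fH gE gH (show x = ((x.toNat:ℕ):ℤ) by omega)]
  simp only [H1of]; rw [if_neg h, show ((x.toNat:ℕ):ℤ) = x by omega]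
lemma vE2off {x : ℤ} (hx : 0 ≤ x) {y z : ℤ} (h : ¬ inF R y z) :
    (uCon R V fE fH gE gH).E2 (x,y,z) = (fE (x,y,z)).2.1 := by
  rw [vE2 R V fE fH gE gH (show x = ((x.toNat:ℕ):ℤ) by omega),
    (sli_off R V fE fH gE gH x.toNat h).1, show ((x.toNat:ℕ):ℤ) = x by omega]
lemma vE3off {x : ℤ} (hx : 0 ≤ x) {y z : ℤ} (h : ¬ inF R y z) :
    (uCon R V fE fH gE gH).E3 (x,y,z) = (fE (x,y,z)).2.2 := by
  rw [vE3 R V fE fH gE gH (show x = ((x.toNat:ℕ):ℤ) by omega),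
    (sli_off R V fE fH gE gH x.toNat h).2.1, show ((x.toNat:ℕ):ℤ) = x by omega]
lemma vH2off {x : ℤ} (hx : 0 ≤ x) {y z : ℤ} (h : ¬ inF R y z) :
    (uCon R V fE fH gE gH).H2 (x,y,z) = (fH (x,y,z)).2.1 := by
  rw [vH2 R V fE fH gE gH (show x = ((x.toNat:ℕ):ℤ) by omega),
    (sli_off R V fE fH gE gH x.toNat h).2.2.1, show ((x.toNat:ℕ):ℤ) = x by omega]
lemma vH3off {x : ℤ} (hx : 0 ≤ x) {y z : ℤ} (h : ¬ inF R y z) :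
    (uCon R V fE fH gE gH).H3 (x,y,z) = (fH (x,y,z)).2.2 := by
  rw [vH3 R V fE fH gE gH (show x = ((x.toNat:ℕ):ℤ) by omega),
    (sli_off R V fE fH gE gH x.toNat h).2.2.2, show ((x.toNat:ℕ):ℤ) = x by omega]

/-- slice-0 and slice-1 values of `uCon` on the face -/
lemma uCon01 {y z : ℤ} (hF : inF R y z) :
    (uCon R V fE fH gE gH).E2 (0,y,z) = (fE (0,y,z)).2.1 ∧
    (uCon R V fE fH gE gH).E3 (0,y,z) = (fE (0,y,z)).2.2 ∧
    (uCon R V fE fH gE gH).H2 (0,y,z) = (fH (0,y,z)).2.1 ∧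
    (uCon R V fE fH gE gH).H3 (0,y,z) = (fH (0,y,z)).2.2 ∧
    (uCon R V fE fH gE gH).E2 (1,y,z) = (fE (0,y,z)).2.1 - (gE (0,y,z)).2.2 ∧
    (uCon R V fE fH gE gH).E3 (1,y,z) = (fE (0,y,z)).2.2 + (gE (0,y,z)).2.1 ∧
    (uCon R V fE fH gE gH).H2 (1,y,z) = (fH (0,y,z)).2.1 - (gH (0,y,z)).2.2 ∧
    (uCon R V fE fH gE gH).H3 (1,y,z) = (fH (0,y,z)).2.2 + (gH (0,y,z)).2.1 := by
  have c0 : (0:ℤ) = ((0:ℕ):ℤ) := by simp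
  have c1 : (1:ℤ) = ((1:ℕ):ℤ) := by simp
  refine ⟨?_, ?_, ?_, ?_, ?_, ?_, ?_, ?_⟩
  · rw [vE2 R V fE fH gE gH c0, sli0]; simp [bSl]
  · rw [vE3 R V fE fH gE gH c0, sli0]; simp [bSl]
  · rw [vH2 R V fE fH gE gH c0, sli0]; simp [bSl]
  · rw [vH3 R V fE fH gE gH c0, sli0]; simp [bSl]
  · rw [vE2 R V fE fH gE gH c1, sli1]; simp only [sl1]; rw [if_pos hF]
  · rw [vE3 R V fE fH gE gH c1, sli1]; simp only [sl1]; rw [if_pos hF]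
  · rw [vH2 R V fE fH gE gH c1, sli1]; simp only [sl1]; rw [if_pos hF]
  · rw [vH3 R V fE fH gE gH c1, sli1]; simp only [sl1]; rw [if_pos hF]

end UCon2
end St3
namespace St3

lemma zd1 (v : C3) : zdot v ((1:ℤ),(0:ℤ),(0:ℤ)) = v.1 := by simp [zdot]
lemma zd1m (v : C3) : zdot v ((-1:ℤ),(0:ℤ),(0:ℤ)) = -v.1 := by simp [zdot]
lemma zd2 (v : C3) : zdot v ((0:ℤ),(1:ℤ),(0:ℤ)) = v.2.1 := by simp [zdot]
lemma zd2m (v : C3) : zdot v ((0:ℤ),(-1:ℤ),(0:ℤ)) = -v.2.1 := by simp [zdot]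
lemma zd3 (v : C3) : zdot v ((0:ℤ),(0:ℤ),(1:ℤ)) = v.2.2 := by simp [zdot]
lemma zd3m (v : C3) : zdot v ((0:ℤ),(0:ℤ),(-1:ℤ)) = -v.2.2 := by simp [zdot]

noncomputable def FEx (R : Z3) (V : Pot) (fE fH gE gH : Z3 → C3) : Z3 → C3 := fun n =>
  if n.1 = R.1 + 1 ∧ 1 ≤ n.2.1 ∧ n.2.1 ≤ R.2.1 ∧ 1 ≤ n.2.2 ∧ n.2.2 ≤ R.2.2
  then ((0:ℂ), (uCon R V fE fH gE gH).E2 n, (uCon R V fE fH gE gH).E3 n) else fE n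

noncomputable def FHx (R : Z3) (V : Pot) (fE fH gE gH : Z3 → C3) : Z3 → C3 := fun n =>
  if n.1 = R.1 + 1 ∧ 1 ≤ n.2.1 ∧ n.2.1 ≤ R.2.1 ∧ 1 ≤ n.2.2 ∧ n.2.2 ≤ R.2.2
  then ((0:ℂ), (uCon R V fE fH gE gH).H2 n, (uCon R V fE fH gE gH).H3 n) else fH n

section Fin
variable {R : Z3} {V : Pot} {fE fH gE gH : Z3 → C3}

lemma FEx_pos {n : Z3} (h : n ∈ bd1p R) :
    FEx R V fE fH gE gH n
      = ((0:ℂ), (uCon R V fE fH gE gH).E2 n, (uCon R V fE fH gE gH).E3 n) := if_pos h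
lemma FEx_neg {n : Z3} (h : n ∉ bd1p R) : FEx R V fE fH gE gH n = fE n := if_neg h
lemma FHx_pos {n : Z3} (h : n ∈ bd1p R) :
    FHx R V fE fH gE gH n
      = ((0:ℂ), (uCon R V fE fH gE gH).H2 n, (uCon R V fE fH gE gH).H3 n) := if_pos h
lemma FHx_neg {n : Z3} (h : n ∉ bd1p R) : FHx R V fE fH gE gH n = fH n := if_neg h

variable (hR : 1 ≤ R.1 ∧ 1 ≤ R.2.1 ∧ 1 ≤ R.2.2)

include hR in
lemma np1m {y z : ℤ} : ((0:ℤ),y,z) ∉ bd1p R := by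
  simp only [bd1p, Set.mem_setOf_eq]; push_neg; intros; omega

include hR in
lemma uConTan (hfE : AdmOn R (bd R \ bd1p R) fE) (hfH : AdmOn R (bd R \ bd1p R) fH) :
    ∀ n ∈ bd R, tanE R (uCon R V fE fH gE gH) n = FEx R V fE fH gE gH n ∧
      tanH R (uCon R V fE fH gE gH) n = FHx R V fE fH gE gH n := by
  obtain ⟨hR1, hR2, hR3⟩ := hR
  rintro ⟨x, y, z⟩ hn
  simp only [bd, bd1, bd2, bd3, Set.mem_union] at hn
  rcases hn with ((h | h) | (h | h)) | (h | h)
  · -- bd1p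
    simp only [bd1p, Set.mem_setOf_eq] at h
    obtain ⟨hx, hy1, hy2, hz1, hz2⟩ := h; subst hx
    have hm : ((R.1+1,y,z) : Z3) ∈ bd1p R := by
      simp only [bd1p, Set.mem_setOf_eq]; exact ⟨trivial, hy1, hy2, hz1, hz2⟩
    rw [tanE_1p hR1, tanH_1p hR1, FEx_pos hm, FHx_pos hm]
    exact ⟨rfl, rfl⟩
  · -- bd1m
    simp only [bd1m, Set.mem_setOf_eq] at h
    obtain ⟨hx, hy1, hy2, hz1, hz2⟩ := h; subst hx
    have hF : inF R y z := ⟨hy1, hy2, hz1, hz2⟩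
    have hmem := mem1m (R := R) hR1 hy1 hy2 hz1 hz2
    obtain ⟨a1, a2, a3, a4, -, -, -, -⟩ := uCon01 R V fE fH gE gH hF
    constructor
    · rw [tanE_1m, FEx_neg (np1m ⟨hR1,hR2,hR3⟩), a1, a2]
      apply c3mk1
      have h0 := hfE _ hmem; rw [nuv1m, zd1m] at h0; exact neg_eq_zero.mp h0
    · rw [tanH_1m, FHx_neg (np1m ⟨hR1,hR2,hR3⟩), a3, a4]
      apply c3mk1
      have h0 := hfH _ hmem; rw [nuv1m, zd1m] at h0; exact neg_eq_zero.mp h0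
  · -- bd2p
    simp only [bd2p, Set.mem_setOf_eq] at h
    obtain ⟨hy, hx1, hx2, hz1, hz2⟩ := h; subst hy
    have hnF : ¬ inF R (R.2.1+1) z := fun hc => by
      have := hc.2.1; omega
    have hnp : ((x,R.2.1+1,z) : Z3) ∉ bd1p R := by
      simp only [bd1p, Set.mem_setOf_eq]; push_neg; intros; omega
    have hmem := mem2f hx1 hx2 (Or.inr rfl) hz1 hz2
    constructor
    · rw [tanE_2 hx1 hx2 hR2 (Or.inr rfl), FEx_neg hnp, vE1off R V fE fH gE gH (by omega) hnF,
        vE3off R V fE fH gE gH (by omega) hnF]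
      apply c3mk2
      have h0 := hfE _ hmem; rw [nuv2p hR2 hx1 hx2, zd2] at h0; exact h0
    · rw [tanH_2 hx1 hx2 hR2 (Or.inr rfl), FHx_neg hnp, vH1off R V fE fH gE gH (by omega) hnF,
        vH3off R V fE fH gE gH (by omega) hnF]
      apply c3mk2
      have h0 := hfH _ hmem; rw [nuv2p hR2 hx1 hx2, zd2] at h0; exact h0
  · -- bd2m
    simp only [bd2m, Set.mem_setOf_eq] at h
    obtain ⟨hy, hx1, hx2, hz1, hz2⟩ := h; subst hy
    have hnF : ¬ inF R (0:ℤ) z := fun hc => by have := hc.1; omega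
    have hnp : ((x,(0:ℤ),z) : Z3) ∉ bd1p R := by
      simp only [bd1p, Set.mem_setOf_eq]; push_neg; intros; omega
    have hmem := mem2f hx1 hx2 (Or.inl rfl) hz1 hz2
    constructor
    · rw [tanE_2 hx1 hx2 hR2 (Or.inl rfl), FEx_neg hnp, vE1off R V fE fH gE gH (by omega) hnF,
        vE3off R V fE fH gE gH (by omega) hnF]
      apply c3mk2
      have h0 := hfE _ hmem; rw [nuv2m hx1 hx2, zd2m] at h0; exact neg_eq_zero.mp h0
    · rw [tanH_2 hx1 hx2 hR2 (Or.inl rfl), FHx_neg hnp, vH1off R V fE fH gE gH (by omega) hnF,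
        vH3off R V fE fH gE gH (by omega) hnF]
      apply c3mk2
      have h0 := hfH _ hmem; rw [nuv2m hx1 hx2, zd2m] at h0; exact neg_eq_zero.mp h0
  · -- bd3p
    simp only [bd3p, Set.mem_setOf_eq] at h
    obtain ⟨hz, hx1, hx2, hy1, hy2⟩ := h; subst hz
    have hnF : ¬ inF R y (R.2.2+1) := fun hc => by have := hc.2.2.2; omega
    have hnp : ((x,y,R.2.2+1) : Z3) ∉ bd1p R := by
      simp only [bd1p, Set.mem_setOf_eq]; push_neg; intros; omega
    have hmem := mem3f hx1 hx2 hy1 hy2 (Or.inr rfl)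
    constructor
    · rw [tanE_3 hx1 hx2 hy1 hy2 hR3 (Or.inr rfl), FEx_neg hnp,
        vE1off R V fE fH gE gH (by omega) hnF, vE2off R V fE fH gE gH (by omega) hnF]
      apply c3mk3
      have h0 := hfE _ hmem; rw [nuv3p hR3 hx1 hx2 hy1 hy2, zd3] at h0; exact h0
    · rw [tanH_3 hx1 hx2 hy1 hy2 hR3 (Or.inr rfl), FHx_neg hnp,
        vH1off R V fE fH gE gH (by omega) hnF, vH2off R V fE fH gE gH (by omega) hnF]
      apply c3mk3
      have h0 := hfH _ hmem; rw [nuv3p hR3 hx1 hx2 hy1 hy2, zd3] at h0; exact h0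
  · -- bd3m
    simp only [bd3m, Set.mem_setOf_eq] at h
    obtain ⟨hz, hx1, hx2, hy1, hy2⟩ := h; subst hz
    have hnF : ¬ inF R y (0:ℤ) := fun hc => by have := hc.2.2.1; omega
    have hnp : ((x,y,(0:ℤ)) : Z3) ∉ bd1p R := by
      simp only [bd1p, Set.mem_setOf_eq]; push_neg; intros; omega
    have hmem := mem3f hx1 hx2 hy1 hy2 (Or.inl rfl)
    constructor
    · rw [tanE_3 hx1 hx2 hy1 hy2 hR3 (Or.inl rfl), FEx_neg hnp,
        vE1off R V fE fH gE gH (by omega) hnF, vE2off R V fE fH gE gH (by omega) hnF]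
      apply c3mk3
      have h0 := hfE _ hmem; rw [nuv3m hx1 hx2 hy1 hy2, zd3m] at h0; exact neg_eq_zero.mp h0
    · rw [tanH_3 hx1 hx2 hy1 hy2 hR3 (Or.inl rfl), FHx_neg hnp,
        vH1off R V fE fH gE gH (by omega) hnF, vH2off R V fE fH gE gH (by omega) hnF]
      apply c3mk3
      have h0 := hfH _ hmem; rw [nuv3m hx1 hx2 hy1 hy2, zd3m] at h0; exact neg_eq_zero.mp h0

include hR in
lemma uConDtan (hgE : AdmOn R (bd1m R) gE) (hgH : AdmOn R (bd1m R) gH) :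
    ∀ n ∈ bd1m R, dtanE R (uCon R V fE fH gE gH) n = gE n ∧
      dtanH R (uCon R V fE fH gE gH) n = gH n := by
  rintro ⟨x, y, z⟩ h
  simp only [bd1m, Set.mem_setOf_eq] at h
  obtain ⟨hx, hy1, hy2, hz1, hz2⟩ := h; subst hx
  have hF : inF R y z := ⟨hy1, hy2, hz1, hz2⟩
  have hmem := mem1m' (R := R) hy1 hy2 hz1 hz2
  obtain ⟨a1, a2, a3, a4, b1, b2, b3, b4⟩ := uCon01 R V fE fH gE gH hF
  constructor
  · rw [dtanE_1m, a1, a2, b1, b2]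
    have h1 : (gE ((0:ℤ),y,z)).1 = 0 := by
      have h0 := hgE _ hmem; rw [nuv1m, zd1m] at h0; exact neg_eq_zero.mp h0
    rw [show -((fE ((0:ℤ),y,z)).2.2 - ((fE ((0:ℤ),y,z)).2.2 + (gE ((0:ℤ),y,z)).2.1))
          = (gE ((0:ℤ),y,z)).2.1 by ring,
        show (fE ((0:ℤ),y,z)).2.1 - ((fE ((0:ℤ),y,z)).2.1 - (gE ((0:ℤ),y,z)).2.2)
          = (gE ((0:ℤ),y,z)).2.2 by ring]
    exact c3mk1 h1
  · rw [dtanH_1m, a3, a4, b3, b4]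
    have h1 : (gH ((0:ℤ),y,z)).1 = 0 := by
      have h0 := hgH _ hmem; rw [nuv1m, zd1m] at h0; exact neg_eq_zero.mp h0
    rw [show -((fH ((0:ℤ),y,z)).2.2 - ((fH ((0:ℤ),y,z)).2.2 + (gH ((0:ℤ),y,z)).2.1))
          = (gH ((0:ℤ),y,z)).2.1 by ring,
        show (fH ((0:ℤ),y,z)).2.1 - ((fH ((0:ℤ),y,z)).2.1 - (gH ((0:ℤ),y,z)).2.2)
          = (gH ((0:ℤ),y,z)).2.2 by ring]
    exact c3mk1 h1

include hR in
lemma dtan_transfer {u u' : Fam} (he : EqOnH R u u') :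
    ∀ n ∈ bd1m R, dtanE R u n = dtanE R u' n ∧ dtanH R u n = dtanH R u' n := by
  rintro ⟨x, y, z⟩ h
  simp only [bd1m, Set.mem_setOf_eq] at h
  obtain ⟨hx, hy1, hy2, hz1, hz2⟩ := h; subst hx
  have m2 : ((0:ℤ),y,z) ∈ dom2 R :=
    Set.mem_union_left _ (Set.mem_union_right _
      (Set.mem_union_right _ (mem1m' hy1 hy2 hz1 hz2)))
  have m3 : ((0:ℤ),y,z) ∈ dom3 R :=
    Set.mem_union_left _ (Set.mem_union_right _
      (Set.mem_union_right _ (mem1m' hy1 hy2 hz1 hz2)))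
  have mo : ((1:ℤ),y,z) ∈ Omega R := memOmega le_rfl hR.1 hy1 hy2 hz1 hz2
  have m2' : ((1:ℤ),y,z) ∈ dom2 R := Set.mem_union_left _ (Set.mem_union_left _ mo)
  have m3' : ((1:ℤ),y,z) ∈ dom3 R := Set.mem_union_left _ (Set.mem_union_left _ mo)
  constructor
  · rw [dtanE_1m, dtanE_1m, (he.2.1 _ m2).1, (he.2.1 _ m2').1,
      (he.2.2 _ m3).1, (he.2.2 _ m3').1]
  · rw [dtanH_1m, dtanH_1m, (he.2.1 _ m2).2, (he.2.1 _ m2').2,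
      (he.2.2 _ m3).2, (he.2.2 _ m3').2]

include hR in
lemma FEx_adm (hfE : AdmOn R (bd R \ bd1p R) fE) : AdmOn R (bd R) (FEx R V fE fH gE gH) := by
  intro n hn
  by_cases hp : n ∈ bd1p R
  · obtain ⟨x, y, z⟩ := n
    have hp' := hp
    simp only [bd1p, Set.mem_setOf_eq] at hp'
    obtain ⟨hx, hy1, hy2, hz1, hz2⟩ := hp'; subst hx
    rw [FEx_pos hp, nuv1p hR.1, zd1]
  · rw [FEx_neg hp]; exact hfE n ⟨hn, hp⟩

include hR in
lemma FHx_adm (hfH : AdmOn R (bd R \ bd1p R) fH) : AdmOn R (bd R) (FHx R V fE fH gE gH) := by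
  intro n hn
  by_cases hp : n ∈ bd1p R
  · obtain ⟨x, y, z⟩ := n
    have hp' := hp
    simp only [bd1p, Set.mem_setOf_eq] at hp'
    obtain ⟨hx, hy1, hy2, hz1, hz2⟩ := hp'; subst hx
    rw [FHx_pos hp, nuv1p hR.1, zd1]
  · rw [FHx_neg hp]; exact hfH n ⟨hn, hp⟩

end Fin
end St3
open St3

theorem statement3 (R : Z3) (hR : 1 ≤ R.1 ∧ 1 ≤ R.2.1 ∧ 1 ≤ R.2.2)
    (V : Pot) (hV : PotInv (Omega R) V)
    -- unique solvability of the full Dirichlet problem (so that `Λ_V` is defined)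
    (huniq : ∀ fE fH : Z3 → C3, AdmOn R (bd R) fE → AdmOn R (bd R) fH →
      (∃ u : Fam, DirSolV R V fE fH u) ∧
      (∀ u u' : Fam, DirSolV R V fE fH u → DirSolV R V fE fH u' → EqOnH R u u'))
    (fE fH : Z3 → C3) (hfE : AdmOn R (bd R \ bd1p R) fE) (hfH : AdmOn R (bd R \ bd1p R) fH)
    (gE gH : Z3 → C3) (hgE : AdmOn R (bd1m R) gE) (hgH : AdmOn R (bd1m R) gH) :
    (∃ FE FH : Z3 → C3, Extends R V fE fH gE gH FE FH) ∧
    (∀ FE FH FE' FH' : Z3 → C3, Extends R V fE fH gE gH FE FH →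
      Extends R V fE fH gE gH FE' FH' →
      ∀ n ∈ bd R, FE n = FE' n ∧ FH n = FH' n) := by
  obtain ⟨hR1, hR2, hR3⟩ := hR
  have hRt : 1 ≤ R.1 ∧ 1 ≤ R.2.1 ∧ 1 ≤ R.2.2 := ⟨hR1, hR2, hR3⟩
  constructor
  · refine ⟨FEx R V fE fH gE gH, FHx R V fE fH gE gH,
      FEx_adm hRt hfE, FHx_adm hRt hfH, ?_, ?_⟩
    · exact fun n hn => ⟨FEx_neg hn.2, FHx_neg hn.2⟩
    · intro u hu n hn
      have hDir : DirSolV R V (FEx R V fE fH gE gH) (FHx R V fE fH gE gH)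
          (uCon R V fE fH gE gH) :=
        ⟨uConMax fE fH gE gH hV, uConTan hRt hfE hfH⟩
      have he := (huniq _ _ (FEx_adm hRt hfE) (FHx_adm hRt hfH)).2 _ _ hDir hu
      have ht := dtan_transfer hRt he n hn
      have hd := uConDtan (V:=V) (fE:=fE) (fH:=fH) hRt hgE hgH n hn
      exact ⟨ht.1.symm.trans hd.1, ht.2.symm.trans hd.2⟩
  · intro FE FH FE' FH' hX hX' n hn
    obtain ⟨haE, haH, hbd, hneu⟩ := hX
    obtain ⟨haE', haH', hbd', hneu'⟩ := hX'
    by_cases hp : n ∈ bd1p R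
    · obtain ⟨u, hu⟩ := (huniq FE FH haE haH).1
      obtain ⟨u', hu'⟩ := (huniq FE' FH' haE' haH').1
      have htE : ∀ m ∈ bd R \ bd1p R, tanE R u m = fE m :=
        fun m hm => (hu.2 m hm.1).1.trans (hbd m hm).1
      have htH : ∀ m ∈ bd R \ bd1p R, tanH R u m = fH m :=
        fun m hm => (hu.2 m hm.1).2.trans (hbd m hm).2
      have hnE : ∀ m ∈ bd1m R, dtanE R u m = gE m := fun m hm => (hneu u hu m hm).1
      have hnH : ∀ m ∈ bd1m R, dtanH R u m = gH m := fun m hm => (hneu u hu m hm).2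
      have htE' : ∀ m ∈ bd R \ bd1p R, tanE R u' m = fE m :=
        fun m hm => (hu'.2 m hm.1).1.trans (hbd' m hm).1
      have htH' : ∀ m ∈ bd R \ bd1p R, tanH R u' m = fH m :=
        fun m hm => (hu'.2 m hm.1).2.trans (hbd' m hm).2
      have hnE' : ∀ m ∈ bd1m R, dtanE R u' m = gE m := fun m hm => (hneu' u' hu' m hm).1
      have hnH' : ∀ m ∈ bd1m R, dtanH R u' m = gH m := fun m hm => (hneu' u' hu' m hm).2
      have hA := agrAll hRt hV hu.1 htE htH hnE hnH
      have hA' := agrAll hRt hV hu'.1 htE' htH' hnE' hnH'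
      obtain ⟨x, y, z⟩ := n
      have hp' := hp
      simp only [bd1p, Set.mem_setOf_eq] at hp'
      obtain ⟨hx, hy1, hy2, hz1, hz2⟩ := hp'; subst hx
      have hF : inF R y z := ⟨hy1, hy2, hz1, hz2⟩
      have ct : (((R.1+1).toNat : ℕ) : ℤ) = R.1+1 := by omega
      have h1 := hA (R.1+1).toNat (le_of_eq ct) y z hF
      have h2 := hA' (R.1+1).toNat (le_of_eq ct) y z hF
      rw [ct] at h1 h2
      have hmem := mem1p (R := R) hR1 hy1 hy2 hz1 hz2
      have e1 : FE (R.1+1,y,z) = (0, u.E2 (R.1+1,y,z), u.E3 (R.1+1,y,z)) := by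
        rw [← (hu.2 _ hmem).1, tanE_1p hR1]
      have e1' : FE' (R.1+1,y,z) = (0, u'.E2 (R.1+1,y,z), u'.E3 (R.1+1,y,z)) := by
        rw [← (hu'.2 _ hmem).1, tanE_1p hR1]
      have f1 : FH (R.1+1,y,z) = (0, u.H2 (R.1+1,y,z), u.H3 (R.1+1,y,z)) := by
        rw [← (hu.2 _ hmem).2, tanH_1p hR1]
      have f1' : FH' (R.1+1,y,z) = (0, u'.H2 (R.1+1,y,z), u'.H3 (R.1+1,y,z)) := by
        rw [← (hu'.2 _ hmem).2, tanH_1p hR1]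
      constructor
      · rw [e1, e1', h1.1, h1.2.1, h2.1, h2.2.1]
      · rw [f1, f1', h1.2.2.1, h1.2.2.2, h2.2.2.1, h2.2.2.2]
    · exact ⟨(hbd n ⟨hn, hp⟩).1.trans ((hbd' n ⟨hn, hp⟩).1).symm,
        (hbd n ⟨hn, hp⟩).2.trans ((hbd' n ⟨hn, hp⟩).2).symm⟩
end

section
/- Let V be an admissible potential on Ω, extended by V(n)=I₆ off Ω, and let c₁ ∈ ℤ. Let u be a family of components u_j^{E/H} (j=1,2,3) with u₂^{E/H},u₃^{E/H} defined on {n∈ℤ³: n₁≥c₁−1} and u₁^{E/H} defined on {n₁≥c₁}, and suppose equations (R1)–(R4) hold at every n with n₁≥c₁. Then u satisfies (A1) and (A2) at every n with n₁≥c₁+1 if and only if u satisfies (R5) and (R6) at every n with n₁≥c₁. -/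
section
variable (V : Pot) (u : Fam)

lemma keyE (a b c : ℤ)
    (h3p : eqR3 V u ((a,b,c)+e3)) (h3m : eqR3 V u ((a,b,c)-e3))
    (h4p : eqR4 V u ((a,b,c)+e2)) (h4m : eqR4 V u ((a,b,c)-e2)) :
    eqA1 V u ((a,b,c)+e1) ↔ eqR5 V u (a,b,c) := by
  simp only [eqA1, eqR5, eqR3, eqR4, e1, e2, e3, Prod.mk_add_mk, Prod.mk_sub_mk] at *
  simp only [add_zero, sub_zero, zero_add, add_sub_cancel_right, sub_add_cancel, neg_neg] at *
  constructor <;> intro h <;> rw [h] <;> congr 1 <;>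
    first
    | linear_combination (h4p - h4m - h3p + h3m)
    | linear_combination -(h4p - h4m - h3p + h3m)

lemma keyH (a b c : ℤ)
    (h2p : eqR2 V u ((a,b,c)+e2)) (h2m : eqR2 V u ((a,b,c)-e2))
    (h1p : eqR1 V u ((a,b,c)+e3)) (h1m : eqR1 V u ((a,b,c)-e3)) :
    eqA2 V u ((a,b,c)+e1) ↔ eqR6 V u (a,b,c) := by
  simp only [eqA2, eqR6, eqR1, eqR2, e1, e2, e3, Prod.mk_add_mk, Prod.mk_sub_mk] at *
  simp only [add_zero, sub_zero, zero_add, add_sub_cancel_right, sub_add_cancel, neg_neg] at *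
  constructor <;> intro h <;> rw [h] <;> congr 1 <;>
    first
    | linear_combination (h2p - h2m - h1p + h1m)
    | linear_combination -(h2p - h2m - h1p + h1m)

end

theorem statement4 (R : Z3) (hR : 1 ≤ R.1 ∧ 1 ≤ R.2.1 ∧ 1 ≤ R.2.2)
    (V : Pot) (hV : PotAdm (Omega R) V) (c1 : ℤ) (u : Fam)
    (hb : ∀ n : Z3, c1 ≤ n.1 → ReqB V u n) :
    (∀ n : Z3, c1 + 1 ≤ n.1 → eqA1 V u n ∧ eqA2 V u n) ↔
    (∀ n : Z3, c1 ≤ n.1 → eqR5 V u n ∧ eqR6 V u n) := by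
  have hfst1 : ∀ a b c : ℤ, (((a,b,c) : Z3) + e1).1 = a + 1 := by intro a b c; rfl
  have hfst2 : ∀ a b c : ℤ, (((a,b,c) : Z3) + e2).1 = a := by intro a b c; simp [e2]
  have hfst2' : ∀ a b c : ℤ, (((a,b,c) : Z3) - e2).1 = a := by intro a b c; simp [e2]
  have hfst3 : ∀ a b c : ℤ, (((a,b,c) : Z3) + e3).1 = a := by intro a b c; simp [e3]
  have hfst3' : ∀ a b c : ℤ, (((a,b,c) : Z3) - e3).1 = a := by intro a b c; simp [e3]
  have key : ∀ a b c : ℤ, c1 ≤ a →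
      ((eqA1 V u ((a,b,c)+e1) ↔ eqR5 V u (a,b,c)) ∧
       (eqA2 V u ((a,b,c)+e1) ↔ eqR6 V u (a,b,c))) := by
    intro a b c ha
    have h1p := (hb ((a,b,c) + e3) (by rw [hfst3]; exact ha)).1
    have h1m := (hb ((a,b,c) - e3) (by rw [hfst3']; exact ha)).1
    have h2p := (hb ((a,b,c) + e2) (by rw [hfst2]; exact ha)).2.1
    have h2m := (hb ((a,b,c) - e2) (by rw [hfst2']; exact ha)).2.1
    have h3p := (hb ((a,b,c) + e3) (by rw [hfst3]; exact ha)).2.2.1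
    have h3m := (hb ((a,b,c) - e3) (by rw [hfst3']; exact ha)).2.2.1
    have h4p := (hb ((a,b,c) + e2) (by rw [hfst2]; exact ha)).2.2.2
    have h4m := (hb ((a,b,c) - e2) (by rw [hfst2']; exact ha)).2.2.2
    exact ⟨keyE V u a b c h3p h3m h4p h4m, keyH V u a b c h2p h2m h1p h1m⟩
  constructor
  · intro hA n hn
    obtain ⟨a, b, c⟩ := n
    have ha : c1 ≤ a := hn
    have hk := key a b c ha
    have hAn := hA ((a,b,c) + e1) (by rw [hfst1]; omega)
    exact ⟨hk.1.mp hAn.1, hk.2.mp hAn.2⟩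
  · intro hRr n hn
    obtain ⟨a, b, c⟩ := n
    have ha : c1 ≤ a - 1 := by
      have : c1 + 1 ≤ a := hn
      omega
    have hk := key (a - 1) b c ha
    have hpt : ((a - 1, b, c) : Z3) + e1 = (a, b, c) := by
      simp [e1, Prod.ext_iff]
    rw [hpt] at hk
    have hRn := hRr (a - 1, b, c) ha
    exact ⟨hk.1.mpr hRn.1, hk.2.mpr hRn.2⟩
end

section
/- Let N ∈ ℤ³ with N₁ ≥ 1. Let V and Ṽ be admissible potentials on Ω (extended by I₆ off Ω) with V(m)=Ṽ(m) for all m ∈ C⁻(N). Let u and ũ be families of components (u₂^{E/H},u₃^{E/H} defined for n₁≥−1, u₁^{E/H} for n₁≥0) satisfying equations (R1)–(R6) with potentials V and Ṽ respectively at every n with 0 ≤ n₁ ≤ N₁−1. If u_j^{E/H}(m)=ũ_j^{E/H}(m) for j=2,3 and all m ∈ C⁻(N) with m₁ ∈ {−1,0}, and u₁^{E/H}(m)=ũ₁^{E/H}(m) for all m ∈ C⁻(N) with m₁=0, then u_j^{E/H}(N)=ũ_j^{E/H}(N) for j=1,2,3. -/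
/-! Statement 5: domain of dependence (Lemma 2.3): if two potentials agree on the
backward cone `C⁻(N)` and two solutions of (R1)–(R6) agree on the initial slabs
inside `C⁻(N)`, then they agree at `N`. -/


lemma statement5_cone_sub (N m p : Z3) (hm : m ∈ Cminus N)
    (h : p.1 + ((p.2.1 - m.2.1).natAbs : ℤ) + ((p.2.2 - m.2.2).natAbs : ℤ) ≤ m.1) :
    p ∈ Cminus N := by
  simp only [Cminus, Set.mem_setOf_eq, Int.abs_eq_natAbs] at hm ⊢
  omega

theorem statement5 (R : Z3) (hR : 1 ≤ R.1 ∧ 1 ≤ R.2.1 ∧ 1 ≤ R.2.2)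
    (N : Z3) (hN : 1 ≤ N.1)
    (V V' : Pot) (hV : PotAdm (Omega R) V) (hV' : PotAdm (Omega R) V')
    (hVeq : ∀ m ∈ Cminus N,
      V.E1 m = V'.E1 m ∧ V.E2 m = V'.E2 m ∧ V.E3 m = V'.E3 m ∧
      V.H1 m = V'.H1 m ∧ V.H2 m = V'.H2 m ∧ V.H3 m = V'.H3 m)
    (u u' : Fam)
    (hu : ∀ n : Z3, 0 ≤ n.1 → n.1 ≤ N.1 - 1 → Req V u n)
    (hu' : ∀ n : Z3, 0 ≤ n.1 → n.1 ≤ N.1 - 1 → Req V' u' n)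
    (h23 : ∀ m ∈ Cminus N, m.1 = -1 ∨ m.1 = 0 →
      u.E2 m = u'.E2 m ∧ u.E3 m = u'.E3 m ∧ u.H2 m = u'.H2 m ∧ u.H3 m = u'.H3 m)
    (h1 : ∀ m ∈ Cminus N, m.1 = 0 → u.E1 m = u'.E1 m ∧ u.H1 m = u'.H1 m) :
    u.E1 N = u'.E1 N ∧ u.E2 N = u'.E2 N ∧ u.E3 N = u'.E3 N ∧
    u.H1 N = u'.H1 N ∧ u.H2 N = u'.H2 N ∧ u.H3 N = u'.H3 N := by
  
  have key : ∀ k : ℕ, (k : ℤ) ≤ N.1 →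
      (∀ m ∈ Cminus N, -1 ≤ m.1 → m.1 ≤ (k : ℤ) →
        u.E2 m = u'.E2 m ∧ u.E3 m = u'.E3 m ∧ u.H2 m = u'.H2 m ∧ u.H3 m = u'.H3 m) ∧
      (∀ m ∈ Cminus N, 0 ≤ m.1 → m.1 ≤ (k : ℤ) →
        u.E1 m = u'.E1 m ∧ u.H1 m = u'.H1 m) := by
    intro k
    induction k with
    | zero =>
      intro _
      exact ⟨fun m hm ha hb => h23 m hm (by omega), fun m hm ha hb => h1 m hm (by omega)⟩
    | succ k ih =>
      intro hk
      obtain ⟨ih23, ih1⟩ := ih (by omega)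
      have key23 : ∀ m ∈ Cminus N, m.1 = (k : ℤ) + 1 →
          u.E2 m = u'.E2 m ∧ u.E3 m = u'.E3 m ∧ u.H2 m = u'.H2 m ∧ u.H3 m = u'.H3 m := by
        intro m hm hm1
        set n := m - e1 with hn
        have hne : n + e1 = m := sub_add_cancel m e1
        have hn1 : n.1 = (k : ℤ) := by rw [hn]; simp [e1] <;> omega
        have cn : n ∈ Cminus N :=
          statement5_cone_sub N m n hm (by rw [hn]; simp [e1] <;> omega)
        have cne1 : n - e1 ∈ Cminus N :=
          statement5_cone_sub N m (n - e1) hm (by rw [hn]; simp [e1] <;> omega)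
        have cp2 : n + e2 ∈ Cminus N :=
          statement5_cone_sub N m (n + e2) hm (by rw [hn]; simp [e1, e2] <;> omega)
        have cm2 : n - e2 ∈ Cminus N :=
          statement5_cone_sub N m (n - e2) hm (by rw [hn]; simp [e1, e2] <;> omega)
        have cp3 : n + e3 ∈ Cminus N :=
          statement5_cone_sub N m (n + e3) hm (by rw [hn]; simp [e1, e3] <;> omega)
        have cm3 : n - e3 ∈ Cminus N :=
          statement5_cone_sub N m (n - e3) hm (by rw [hn]; simp [e1, e3] <;> omega)
        have x1 : (n - e1).1 = (k : ℤ) - 1 := by simp [e1] <;> omega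
        have x2 : (n + e2).1 = (k : ℤ) := by simp [e2] <;> omega
        have x3 : (n - e2).1 = (k : ℤ) := by simp [e2] <;> omega
        have x4 : (n + e3).1 = (k : ℤ) := by simp [e3] <;> omega
        have x5 : (n - e3).1 = (k : ℤ) := by simp [e3] <;> omega
        have req := hu n (by omega) (by omega)
        have req' := hu' n (by omega) (by omega)
        simp only [Req, ReqB, eqR1, eqR2, eqR3, eqR4, eqR5, eqR6] at req req'
        obtain ⟨⟨r1, r2, r3, r4⟩, -, -⟩ := req
        obtain ⟨⟨r1', r2', r3', r4'⟩, -, -⟩ := req'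
        rw [hne] at r1 r2 r3 r4 r1' r2' r3' r4'
        obtain ⟨pE1, pE2, pE3, pH1, pH2, pH3⟩ := hVeq n cn
        obtain ⟨aE2, aE3, aH2, aH3⟩ := ih23 n cn (by omega) (by omega)
        obtain ⟨bE2, bE3, bH2, bH3⟩ := ih23 (n - e1) cne1 (by omega) (by omega)
        obtain ⟨dE1p2, dH1p2⟩ := ih1 (n + e2) cp2 (by omega) (by omega)
        obtain ⟨dE1m2, dH1m2⟩ := ih1 (n - e2) cm2 (by omega) (by omega)
        obtain ⟨dE1p3, dH1p3⟩ := ih1 (n + e3) cp3 (by omega) (by omega)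
        obtain ⟨dE1m3, dH1m3⟩ := ih1 (n - e3) cm3 (by omega) (by omega)
        refine ⟨?_, ?_, ?_, ?_⟩
        · rw [r1, r1', pH3, aH3, dE1p2, dE1m2, bE2]
        · rw [r2, r2', pH2, aH2, dE1p3, dE1m3, bE3]
        · rw [r3, r3', pE3, aE3, dH1p2, dH1m2, bH2]
        · rw [r4, r4', pE2, aE2, dH1p3, dH1m3, bH3]
      have key1 : ∀ m ∈ Cminus N, m.1 = (k : ℤ) + 1 →
          u.E1 m = u'.E1 m ∧ u.H1 m = u'.H1 m := by
        intro m hm hm1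
        set n := m - e1 with hn
        have hne : n + e1 = m := sub_add_cancel m e1
        have hn1 : n.1 = (k : ℤ) := by rw [hn]; simp [e1] <;> omega
        have cp2 : n + e2 ∈ Cminus N :=
          statement5_cone_sub N m (n + e2) hm (by rw [hn]; simp [e1, e2] <;> omega)
        have cm2 : n - e2 ∈ Cminus N :=
          statement5_cone_sub N m (n - e2) hm (by rw [hn]; simp [e1, e2] <;> omega)
        have cp3 : n + e3 ∈ Cminus N :=
          statement5_cone_sub N m (n + e3) hm (by rw [hn]; simp [e1, e3] <;> omega)
        have cm3 : n - e3 ∈ Cminus N :=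
          statement5_cone_sub N m (n - e3) hm (by rw [hn]; simp [e1, e3] <;> omega)
        have cp21 : n + e2 - e1 ∈ Cminus N :=
          statement5_cone_sub N m (n + e2 - e1) hm (by rw [hn]; simp [e1, e2] <;> omega)
        have cm21 : n - e2 - e1 ∈ Cminus N :=
          statement5_cone_sub N m (n - e2 - e1) hm (by rw [hn]; simp [e1, e2] <;> omega)
        have cp31 : n + e3 - e1 ∈ Cminus N :=
          statement5_cone_sub N m (n + e3 - e1) hm (by rw [hn]; simp [e1, e3] <;> omega)
        have cm31 : n - e3 - e1 ∈ Cminus N :=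
          statement5_cone_sub N m (n - e3 - e1) hm (by rw [hn]; simp [e1, e3] <;> omega)
        have x2 : (n + e2).1 = (k : ℤ) := by simp [e2] <;> omega
        have x3 : (n - e2).1 = (k : ℤ) := by simp [e2] <;> omega
        have x4 : (n + e3).1 = (k : ℤ) := by simp [e3] <;> omega
        have x5 : (n - e3).1 = (k : ℤ) := by simp [e3] <;> omega
        have y2 : (n + e2 - e1).1 = (k : ℤ) - 1 := by simp [e1, e2] <;> omega
        have y3 : (n - e2 - e1).1 = (k : ℤ) - 1 := by simp [e1, e2] <;> omega
        have y4 : (n + e3 - e1).1 = (k : ℤ) - 1 := by simp [e1, e3] <;> omega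
        have y5 : (n - e3 - e1).1 = (k : ℤ) - 1 := by simp [e1, e3] <;> omega
        have req := hu n (by omega) (by omega)
        have req' := hu' n (by omega) (by omega)
        simp only [Req, ReqB, eqR5, eqR6] at req req'
        obtain ⟨-, r5, r6⟩ := req
        obtain ⟨-, r5', r6'⟩ := req'
        rw [hne] at r5 r6 r5' r6'
        obtain ⟨pE1m, -, -, pH1m, -, -⟩ := hVeq m hm
        obtain ⟨-, pE2p2, -, -, pH2p2, -⟩ := hVeq (n + e2) cp2
        obtain ⟨-, pE2m2, -, -, pH2m2, -⟩ := hVeq (n - e2) cm2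
        obtain ⟨-, -, pE3p3, -, -, pH3p3⟩ := hVeq (n + e3) cp3
        obtain ⟨-, -, pE3m3, -, -, pH3m3⟩ := hVeq (n - e3) cm3
        obtain ⟨aE2p2, -, aH2p2, -⟩ := ih23 (n + e2) cp2 (by omega) (by omega)
        obtain ⟨aE2m2, -, aH2m2, -⟩ := ih23 (n - e2) cm2 (by omega) (by omega)
        obtain ⟨-, aE3p3, -, aH3p3⟩ := ih23 (n + e3) cp3 (by omega) (by omega)
        obtain ⟨-, aE3m3, -, aH3m3⟩ := ih23 (n - e3) cm3 (by omega) (by omega)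
        obtain ⟨-, bE3p2, -, bH3p2⟩ := ih23 (n + e2 - e1) cp21 (by omega) (by omega)
        obtain ⟨-, bE3m2, -, bH3m2⟩ := ih23 (n - e2 - e1) cm21 (by omega) (by omega)
        obtain ⟨bE2p3, -, bH2p3, -⟩ := ih23 (n + e3 - e1) cp31 (by omega) (by omega)
        obtain ⟨bE2m3, -, bH2m3, -⟩ := ih23 (n - e3 - e1) cm31 (by omega) (by omega)
        constructor
        · rw [r5, r5', pE1m, pE2p2, aE2p2, pE3p3, aE3p3, bH3p2, bH2p3,
            pE2m2, aE2m2, pE3m3, aE3m3, bH3m2, bH2m3]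
        · rw [r6, r6', pH1m, pH2p2, aH2p2, pH3p3, aH3p3, bE3p2, bE2p3,
            pH2m2, aH2m2, pH3m3, aH3m3, bE3m2, bE2m3]
      constructor
      · intro m hm ha hb
        rcases eq_or_lt_of_le hb with heq | hlt
        · exact key23 m hm (by omega)
        · exact ih23 m hm ha (by omega)
      · intro m hm ha hb
        rcases eq_or_lt_of_le hb with heq | hlt
        · exact key1 m hm (by omega)
        · exact ih1 m hm ha (by omega)
  obtain ⟨k23, k1⟩ := key N.1.toNat (by omega)
  have hNc : N ∈ Cminus N := by simp [Cminus]
  obtain ⟨qE2, qE3, qH2, qH3⟩ := k23 N hNc (by omega) (by omega)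
  obtain ⟨qE1, qH1⟩ := k1 N hNc (by omega) (by omega)
  exact ⟨qE1, qE2, qE3, qH1, qH2, qH3⟩
end
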